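/- arXiv:1906.02162 — 12 statements merged into one kernel-verified Lean document; each statement's English description precedes it below -/
import Mathlib

section
/- Let 1 < p < ∞ and 1 ≤ q < ∞, and let T : ℓ_p → ℓ_q be a bounded linear operator. If there exists a maximizing sequence (xₙ) for T (i.e., ‖xₙ‖ = 1 for all n and ‖T xₙ‖ → ‖T‖) that does not converge weakly to 0, then T attains its norm. -/
/-!
Pass to a subsequence of the maximizing sequence that converges coordinatewise to some `v`; since
bounded coordinatewise null sequences in `ℓᵖ` (`1 < p < ∞`) are weakly null and `(xₙ)` is not,
`v ≠ 0`. Put `wₙ = xₙ - v`. By the Brezis–Lieb splitting `‖z + wₙ‖ʳ - ‖wₙ‖ʳ → ‖z‖ʳ`, in `ℓᵖ` and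
in `ℓ^q`, adding `wₙ` to any `z` adds `(τ, B) = (1 - ‖v‖ᵖ, ‖T‖^q - ‖T v‖^q)` to
`(‖z‖ᵖ, ‖T z‖^q)` in the limit. Adding `k` such asymptotically disjoint copies to `0` gives
`k B ≤ ‖T‖^q (k τ)^(q/p)`. If `p ≤ q`, the case `k = 1` already gives `‖T v‖ ≥ ‖T‖ ‖v‖`; if
`q < p`, letting `k → ∞` gives `B = 0`. In both cases `v / ‖v‖` attains the norm.
The weak nullity itself follows from the same `k`-copies argument applied to a functional
`g`, where `‖g z‖ ≤ ‖g‖ (‖z‖ᵖ)^(1/p)` has exponent `1/p < 1`.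
-/

open Filter Topology
open scoped ENNReal

theorem nonpos_of_forall_nat_mul_le_mul_rpow {b c τ s : ℝ} (hτ : 0 ≤ τ) (hs : s < 1)
    (h : ∀ k : ℕ, k * b ≤ c * (k * τ) ^ s) : b ≤ 0 := by
  have hbound : ∀ᶠ k : ℕ in atTop, b ≤ c * τ ^ s * (k : ℝ) ^ (s - 1) := by
    filter_upwards [eventually_gt_atTop 0] with k hk
    have hk' : (0 : ℝ) < k := Nat.cast_pos.2 hk
    have hbk := h k
    rw [Real.mul_rpow hk'.le hτ] at hbk
    rw [Real.rpow_sub_one hk'.ne', ← mul_div_assoc, le_div_iff₀ hk']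
    linarith
  have hlim : Tendsto (fun k : ℕ => c * τ ^ s * (k : ℝ) ^ (s - 1)) atTop (𝓝 0) := by
    have hpow := (tendsto_rpow_neg_atTop (sub_pos.2 hs)).comp tendsto_natCast_atTop_atTop
    simpa using hpow.const_mul (c * τ ^ s)
  exact ge_of_tendsto hlim hbound

theorem mul_le_of_forall_nat_mul_sub_rpow_le {M a t p q : ℝ} (hM : 0 ≤ M) (ha : 0 ≤ a)
    (ha1 : a ≤ 1) (ht : 0 ≤ t) (hp : 0 < p) (hq : 0 < q)
    (h : ∀ k : ℕ, k * (M ^ q - t ^ q) ≤ M ^ q * (k * (1 - a ^ p)) ^ (q / p)) : M * a ≤ t := by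
  have hτ : 0 ≤ 1 - a ^ p := sub_nonneg.2 (Real.rpow_le_one ha ha1 hp.le)
  have hMq : 0 ≤ M ^ q := Real.rpow_nonneg hM q
  rw [← Real.rpow_le_rpow_iff (by positivity) ht hq, Real.mul_rpow hM ha]
  rcases lt_or_ge q p with hqp | hpq
  · have hB := nonpos_of_forall_nat_mul_le_mul_rpow hτ ((div_lt_one hp).2 hqp) h
    have := mul_le_mul_of_nonneg_left (Real.rpow_le_one ha ha1 hq.le) hMq
    linarith
  · have h1 := h 1
    simp only [Nat.cast_one, one_mul] at h1
    have h2 := mul_le_mul_of_nonneg_left (Real.rpow_le_self_of_le_one hτ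
      (by linarith [Real.rpow_nonneg ha p]) ((one_le_div hp).2 hpq)) hMq
    have h3 := mul_le_mul_of_nonneg_left (Real.rpow_le_rpow_of_exponent_ge' ha ha1 hp.le hpq) hMq
    nlinarith

theorem nsmul_mem_closure_of_forall_add_mem_closure {M : Type*} [AddMonoid M]
    [TopologicalSpace M] [ContinuousAdd M] {S : Set M} {c : M} (h0 : (0 : M) ∈ closure S)
    (hc : ∀ y ∈ S, y + c ∈ closure S) (k : ℕ) : k • c ∈ closure S := by
  have hclosure : ∀ y ∈ closure S, y + c ∈ closure S := fun y hy =>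
    closure_minimal (show (· + c) '' S ⊆ closure S from Set.image_subset_iff.2 hc)
      isClosed_closure
      (image_closure_subset_closure_image (continuous_add_const c) ⟨y, hy, rfl⟩)
  induction k with
  | zero => simpa using h0
  | succ k ih => simpa [succ_nsmul] using hclosure _ ih

section Copies

variable {E G : Type*} [AddZeroClass E] [NormedAddCommGroup G] {ψ : E → ℝ} {Φ : E → G}
  {M s τ : ℝ} {β : G} {w : ℕ → E}

theorem nat_mul_norm_le_of_tendsto_add (𝕜 : Type*) [RCLike 𝕜] [NormedSpace 𝕜 G] (hs : 0 < s)
    (hψ0 : ψ 0 = 0) (hΦ0 : Φ 0 = 0) (hΦψ : ∀ z, ‖Φ z‖ ≤ M * ψ z ^ s)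
    (hψw : ∀ z, Tendsto (fun n => ψ (z + w n)) atTop (𝓝 (ψ z + τ)))
    (hΦw : ∀ z, Tendsto (fun n => Φ (z + w n)) atTop (𝓝 (Φ z + β))) (k : ℕ) :
    k * ‖β‖ ≤ M * (k * τ) ^ s := by
  set S := Set.range fun z => (ψ z, Φ z)
  have hkS : k • (τ, β) ∈ closure S := by
    refine nsmul_mem_closure_of_forall_add_mem_closure
      (subset_closure (Set.mem_range.2 ⟨0, by simp [hψ0, hΦ0]⟩)) ?_ k
    rintro _ ⟨z, rfl⟩
    exact mem_closure_of_tendsto ((hψw z).prodMk_nhds (hΦw z))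
      (Eventually.of_forall fun n => ⟨z + w n, rfl⟩)
  have hclosed : IsClosed {y : ℝ × G | ‖y.2‖ ≤ M * y.1 ^ s} :=
    isClosed_le continuous_snd.norm
      (continuous_const.mul ((Real.continuous_rpow_const hs.le).comp continuous_fst))
  have hk := closure_minimal (by rintro _ ⟨z, rfl⟩; exact hΦψ z) hclosed hkS
  simpa [RCLike.norm_nsmul 𝕜] using hk

theorem eq_zero_of_tendsto_add (𝕜 : Type*) [RCLike 𝕜] [NormedSpace 𝕜 G] (hs : 0 < s)
    (hs1 : s < 1) (hψ : ∀ z, 0 ≤ ψ z) (hψ0 : ψ 0 = 0) (hΦ0 : Φ 0 = 0)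
    (hΦψ : ∀ z, ‖Φ z‖ ≤ M * ψ z ^ s)
    (hψw : ∀ z, Tendsto (fun n => ψ (z + w n)) atTop (𝓝 (ψ z + τ)))
    (hΦw : ∀ z, Tendsto (fun n => Φ (z + w n)) atTop (𝓝 (Φ z + β))) : β = 0 := by
  have hτ : 0 ≤ τ := by
    simpa [hψ0] using ge_of_tendsto' (hψw 0) fun n => hψ _
  exact norm_le_zero_iff.1 <| nonpos_of_forall_nat_mul_le_mul_rpow hτ hs1
    (nat_mul_norm_le_of_tendsto_add 𝕜 hs hψ0 hΦ0 hΦψ hψw hΦw)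

end Copies

theorem equicontinuousAt_comp_norm_add {ι E : Type*} [SeminormedAddCommGroup E] {h : ℝ → ℝ}
    (hh : Continuous h) {w : ι → E} {C : ℝ} (hC : ∀ i, ‖w i‖ ≤ C) (z : E) :
    EquicontinuousAt (fun i y => h ‖y + w i‖) z := by
  rw [Metric.equicontinuousAt_iff]
  intro ε hε
  set R := ‖z‖ + 1 + C
  obtain ⟨δ, hδ, hhδ⟩ := Metric.uniformContinuousOn_iff.1
    ((isCompact_Icc (a := 0) (b := R)).uniformContinuousOn_of_continuous hh.continuousOn) ε hε
  have hmem : ∀ u i, ‖u - z‖ ≤ 1 → ‖u + w i‖ ∈ Set.Icc 0 R := fun u i hu =>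
    ⟨norm_nonneg _, by linarith [norm_add_le u (w i), norm_sub_norm_le u z, hC i]⟩
  refine ⟨min δ 1, by positivity, fun y hy i => ?_⟩
  rw [dist_eq_norm] at hy
  refine hhδ _ (hmem z i (by simp)) _ (hmem y i (by linarith [min_le_right δ 1])) ?_
  calc dist ‖z + w i‖ ‖y + w i‖ ≤ ‖(z + w i) - (y + w i)‖ := abs_norm_sub_norm_le _ _
    _ = ‖y - z‖ := by rw [add_sub_add_right_eq_sub, norm_sub_rev]
    _ < δ := hy.trans_le (min_le_left δ 1)

theorem ContinuousLinearMap.exists_norm_eq_one_norm_apply_eq_opNorm_of_opNorm_mul_le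
    {𝕜 E F : Type*} [RCLike 𝕜] [NormedAddCommGroup E] [NormedSpace 𝕜 E]
    [SeminormedAddCommGroup F] [NormedSpace 𝕜 F] (T : E →L[𝕜] F) {v : E} (hv : v ≠ 0)
    (h : ‖T‖ * ‖v‖ ≤ ‖T v‖) : ∃ x₀, ‖x₀‖ = 1 ∧ ‖T x₀‖ = ‖T‖ := by
  refine ⟨(‖v‖⁻¹ : 𝕜) • v, norm_smul_inv_norm hv, ?_⟩
  rw [map_smul, norm_smul, norm_inv, RCLike.norm_ofReal, abs_norm, inv_mul_eq_div,
    div_eq_iff (norm_ne_zero_iff.2 hv)]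
  exact le_antisymm (T.le_opNorm v) h

namespace lp

variable {α : Type*} {E : α → Type*} [∀ i, NormedAddCommGroup (E i)] {p : ℝ≥0∞} [Fact (1 ≤ p)]

theorem norm_add_rpow_sub_norm_rpow_eq_sum (hp : p ≠ ⊤) {y : lp E p} {s : Finset α}
    (hy : ∀ i ∉ s, y i = 0) (w : lp E p) :
    ‖y + w‖ ^ p.toReal - ‖w‖ ^ p.toReal
      = ∑ i ∈ s, (‖y i + w i‖ ^ p.toReal - ‖w i‖ ^ p.toReal) := by
  have hp0 : 0 < p.toReal := ENNReal.toReal_pos (zero_lt_one.trans_le Fact.out).ne' hp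
  rw [norm_rpow_eq_tsum hp0, norm_rpow_eq_tsum hp0,
    ← (hasSum_norm hp0 _).summable.tsum_sub (hasSum_norm hp0 _).summable]
  exact tsum_eq_sum fun i hi => by simp [hy i hi]

theorem tendsto_norm_add_rpow_sub_norm_rpow (hp : p ≠ ⊤) (z : lp E p) {w : ℕ → lp E p}
    {C : ℝ} (hC : ∀ n, ‖w n‖ ≤ C) (hw : Tendsto (fun n => ⇑(w n)) atTop (𝓝 0)) :
    Tendsto (fun n => ‖z + w n‖ ^ p.toReal - ‖w n‖ ^ p.toReal) atTop
      (𝓝 (‖z‖ ^ p.toReal)) := by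
  have hp0 : 0 < p.toReal := ENNReal.toReal_pos (zero_lt_one.trans_le Fact.out).ne' hp
  have hpow : Continuous fun t : ℝ => t ^ p.toReal := Real.continuous_rpow_const hp0.le
  have hF : EquicontinuousAt (fun n y => ‖y + w n‖ ^ p.toReal - ‖w n‖ ^ p.toReal) z := by
    have h := equicontinuousAt_comp_norm_add hpow hC z
    rw [Metric.equicontinuousAt_iff] at h ⊢
    simpa only [dist_sub_right] using h
  -- equicontinuity reduces the claim to finitely supported `z`, where it is a finite sum
  refine hF.tendsto_of_mem_closure (s := {y | ∃ s : Finset α, ∀ i ∉ s, y i = 0})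
    ((hpow.comp continuous_norm).continuousAt.tendsto.mono_left nhdsWithin_le_nhds) ?_ ?_
  · rintro y ⟨s, hy⟩
    have hG : Continuous fun u : ∀ i, E i =>
        ∑ i ∈ s, (‖y i + u i‖ ^ p.toReal - ‖u i‖ ^ p.toReal) :=
      continuous_finsetSum _ fun i _ =>
        (hpow.comp (continuous_const.add (continuous_apply i)).norm).sub
          (hpow.comp (continuous_apply i).norm)
    have hy0 := norm_add_rpow_sub_norm_rpow_eq_sum hp hy 0
    simp only [add_zero, norm_zero, coeFn_zero, Pi.zero_apply, Real.zero_rpow hp0.ne',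
      sub_zero] at hy0
    simp only [norm_add_rpow_sub_norm_rpow_eq_sum hp hy]
    simpa [hy0, Real.zero_rpow hp0.ne', Function.comp_def] using (hG.tendsto 0).comp hw
  · classical
    refine mem_closure_of_tendsto (lp.hasSum_single hp z)
      (Eventually.of_forall fun s => ⟨s, fun i hi => ?_⟩)
    show (⇑(∑ j ∈ s, lp.single p j (z j)) : ∀ i, E i) i = 0
    rw [coeFn_sum, Finset.sum_apply (M := E)]
    simp [hi]

theorem tendsto_norm_add_rpow (hp : p ≠ ⊤) {w : ℕ → lp E p} {C τ : ℝ} (hC : ∀ n, ‖w n‖ ≤ C)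
    (hw : Tendsto (fun n => ⇑(w n)) atTop (𝓝 0))
    (hτ : Tendsto (fun n => ‖w n‖ ^ p.toReal) atTop (𝓝 τ)) (z : lp E p) :
    Tendsto (fun n => ‖z + w n‖ ^ p.toReal) atTop (𝓝 (‖z‖ ^ p.toReal + τ)) := by
  simpa using (tendsto_norm_add_rpow_sub_norm_rpow hp z hC hw).add hτ

variable {𝕜 : Type*} [RCLike 𝕜] [∀ i, NormedSpace 𝕜 (E i)]

theorem tendsto_apply_zero_of_tendsto_coe_zero {F : Type*} [NormedAddCommGroup F]
    [NormedSpace 𝕜 F] [ProperSpace F] (hp : 1 < p) (hp' : p ≠ ⊤) (g : lp E p →L[𝕜] F)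
    {d : ℕ → lp E p} {C : ℝ} (hC : ∀ n, ‖d n‖ ≤ C)
    (hd : Tendsto (fun n => ⇑(d n)) atTop (𝓝 0)) :
    Tendsto (fun n => g (d n)) atTop (𝓝 0) := by
  have hr : 1 < p.toReal := by
    simpa using (ENNReal.toReal_lt_toReal ENNReal.one_ne_top hp').2 hp
  have hr0 : 0 < p.toReal := zero_lt_one.trans hr
  refine tendsto_of_subseq_tendsto fun ns hns => ?_
  have hbdd : Bornology.IsBounded
      (Set.range fun n => (‖d (ns n)‖ ^ p.toReal, g (d (ns n)))) :=
    isBounded_iff_forall_norm_le.2 ⟨max (C ^ p.toReal) (‖g‖ * C), Set.forall_mem_range.2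
      fun n => norm_prod_le_iff.2
        ⟨le_max_of_le_left <| by
          rw [Real.norm_of_nonneg (by positivity)]
          exact Real.rpow_le_rpow (norm_nonneg _) (hC _) hr0.le,
        le_max_of_le_right (g.le_of_opNorm_le_of_le le_rfl (hC _))⟩⟩
  obtain ⟨⟨τ, β⟩, -, φ, hφ, hlim⟩ := tendsto_subseq_of_bounded hbdd fun n => ⟨n, rfl⟩
  set w := fun n => d (ns (φ n))
  have hw : Tendsto (fun n => ⇑(w n)) atTop (𝓝 0) := hd.comp (hns.comp hφ.tendsto_atTop)
  have hβ : Tendsto (fun n => g (w n)) atTop (𝓝 β) := hlim.snd_nhds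
  have hβ0 : β = 0 := eq_zero_of_tendsto_add 𝕜 (ψ := fun z => ‖z‖ ^ p.toReal) (M := ‖g‖)
    (inv_pos.2 hr0) (inv_lt_one_of_one_lt₀ hr) (fun z => by positivity)
    (by simp [Real.zero_rpow hr0.ne']) g.map_zero
    (fun z => by rw [Real.rpow_rpow_inv (norm_nonneg _) hr0.ne']; exact g.le_opNorm z)
    (tendsto_norm_add_rpow hp' (fun n => hC _) hw hlim.fst_nhds)
    (fun z => by simpa only [map_add] using hβ.const_add (g z))
  exact ⟨φ, hβ0 ▸ hβ⟩

theorem exists_subseq_tendsto_coe [Countable α] [∀ i, ProperSpace (E i)] {x : ℕ → lp E p}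
    {C : ℝ} (hC : ∀ n, ‖x n‖ ≤ C) :
    ∃ v : lp E p, ∃ φ : ℕ → ℕ, StrictMono φ ∧ Tendsto (fun n => ⇑(x (φ n))) atTop (𝓝 ⇑v) := by
  have hp0 : p ≠ 0 := (zero_lt_one.trans_le Fact.out).ne'
  have hK : IsCompact (Set.univ.pi fun i => Metric.closedBall (0 : E i) C) :=
    isCompact_univ_pi fun i => isCompact_closedBall 0 C
  obtain ⟨v, -, φ, hφ, hv⟩ := hK.tendsto_subseq (x := fun n => ⇑(x n)) fun n =>
    Set.mem_univ_pi.2 fun i =>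
      mem_closedBall_zero_iff.2 ((norm_apply_le_norm hp0 _ i).trans (hC n))
  have hbdd : Bornology.IsBounded (Set.range (x ∘ φ)) :=
    isBounded_iff_forall_norm_le.2 ⟨C, Set.forall_mem_range.2 fun n => hC (φ n)⟩
  exact ⟨⟨v, memℓp_of_tendsto hbdd hv⟩, φ, hφ, hv⟩

theorem exists_subseq_tendsto_coe_ne_zero [Countable α] [∀ i, ProperSpace (E i)]
    (hp : 1 < p) (hp' : p ≠ ⊤) {x : ℕ → lp E p} {C : ℝ} (hC : ∀ n, ‖x n‖ ≤ C)
    (hx : ¬ ∀ f : lp E p →L[𝕜] 𝕜, Tendsto (fun n => f (x n)) atTop (𝓝 0)) :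
    ∃ v : lp E p, v ≠ 0 ∧ ∃ φ : ℕ → ℕ, Tendsto φ atTop atTop ∧
      Tendsto (fun n => ⇑(x (φ n))) atTop (𝓝 ⇑v) := by
  contrapose! hx
  intro f
  refine tendsto_of_subseq_tendsto fun ns hns => ?_
  obtain ⟨v, φ, hφ, hv⟩ := exists_subseq_tendsto_coe fun n => hC (ns n)
  obtain rfl : v = 0 := by
    by_contra hv0
    exact hx v hv0 (ns ∘ φ) (hns.comp hφ.tendsto_atTop) hv
  exact ⟨φ, tendsto_apply_zero_of_tendsto_coe_zero hp hp' f (fun n => hC _)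
    (by rwa [coeFn_zero] at hv)⟩

theorem nat_mul_le_opNorm_rpow_mul {ι : Type*} {E' : ι → Type*}
    [∀ i, NormedAddCommGroup (E' i)] [∀ i, NormedSpace 𝕜 (E' i)] {q : ℝ≥0∞} [Fact (1 ≤ q)]
    (hp : p ≠ ⊤) (hq : q ≠ ⊤) (T : lp E p →L[𝕜] lp E' q) {w : ℕ → lp E p} {C τ B : ℝ}
    (hC : ∀ n, ‖w n‖ ≤ C) (hw : Tendsto (fun n => ⇑(w n)) atTop (𝓝 0))
    (hTw : Tendsto (fun n => ⇑(T (w n))) atTop (𝓝 0))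
    (hτ : Tendsto (fun n => ‖w n‖ ^ p.toReal) atTop (𝓝 τ))
    (hB : Tendsto (fun n => ‖T (w n)‖ ^ q.toReal) atTop (𝓝 B)) (k : ℕ) :
    k * B ≤ ‖T‖ ^ q.toReal * (k * τ) ^ (q.toReal / p.toReal) := by
  have hp0 : 0 < p.toReal := ENNReal.toReal_pos (zero_lt_one.trans_le Fact.out).ne' hp
  have hq0 : 0 < q.toReal := ENNReal.toReal_pos (zero_lt_one.trans_le Fact.out).ne' hq
  have hTC : ∀ n, ‖T (w n)‖ ≤ ‖T‖ * C := fun n => T.le_of_opNorm_le_of_le le_rfl (hC n)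
  refine (mul_le_mul_of_nonneg_left (le_abs_self B) k.cast_nonneg).trans ?_
  refine nat_mul_norm_le_of_tendsto_add ℝ (ψ := fun z => ‖z‖ ^ p.toReal)
    (Φ := fun z => ‖T z‖ ^ q.toReal) (div_pos hq0 hp0) (by simp [Real.zero_rpow hp0.ne'])
    (by simp [Real.zero_rpow hq0.ne']) (fun z => ?_) (tendsto_norm_add_rpow hp hC hw hτ)
    (fun z => by simpa only [map_add] using tendsto_norm_add_rpow hq hTC hTw hB (T z)) k
  rw [← Real.rpow_mul (norm_nonneg _), mul_div_cancel₀ _ hp0.ne',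
    ← Real.mul_rpow (norm_nonneg _) (norm_nonneg _), Real.norm_of_nonneg (by positivity)]
  exact Real.rpow_le_rpow (norm_nonneg _) (T.le_opNorm z) hq0.le

end lp

/-- If `1 < p < ∞`, `1 ≤ q < ∞` and `T : ℓ_p → ℓ_q` is a bounded linear
operator admitting a maximizing sequence that does not converge weakly to `0`, then
`T` attains its norm. -/
theorem weak_maximizing_lp_lq {𝕜 : Type*} [RCLike 𝕜] (p q : ℝ≥0∞)
    [Fact (1 ≤ p)] [Fact (1 ≤ q)] (hp : 1 < p) (hp' : p ≠ ⊤) (hq' : q ≠ ⊤)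
    (T : lp (fun _ : ℕ => 𝕜) p →L[𝕜] lp (fun _ : ℕ => 𝕜) q)
    (x : ℕ → lp (fun _ : ℕ => 𝕜) p)
    (hx1 : ∀ n, ‖x n‖ = 1)
    (hmax : Tendsto (fun n => ‖T (x n)‖) atTop (𝓝 ‖T‖))
    (hnw : ¬ ∀ f : lp (fun _ : ℕ => 𝕜) p →L[𝕜] 𝕜,
      Tendsto (fun n => f (x n)) atTop (𝓝 0)) :
    ∃ x₀, ‖x₀‖ = 1 ∧ ‖T x₀‖ = ‖T‖ := by
  have hq0 : 0 < q.toReal := ENNReal.toReal_pos (zero_lt_one.trans_le Fact.out).ne' hq'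
  obtain ⟨v, hv0, φ, hφ, hxv⟩ :=
    lp.exists_subseq_tendsto_coe_ne_zero hp hp' (fun n => (hx1 n).le) hnw
  set w := fun n => x (φ n) - v
  have hwb : ∀ n, ‖w n‖ ≤ 1 + ‖v‖ := fun n => (norm_sub_le _ _).trans (by rw [hx1])
  have hw : Tendsto (fun n => ⇑(w n)) atTop (𝓝 0) := by
    have h := hxv.sub_const (⇑v : ℕ → 𝕜)
    rwa [sub_self] at h
  have hTw : Tendsto (fun n => ⇑(T (w n))) atTop (𝓝 0) := tendsto_pi_nhds.2 fun i =>
    lp.tendsto_apply_zero_of_tendsto_coe_zero hp hp' ((lp.evalCLM 𝕜 _ q i).comp T) hwb hw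
  have hτ : Tendsto (fun n => ‖w n‖ ^ p.toReal) atTop (𝓝 (1 - ‖v‖ ^ p.toReal)) := by
    simpa [w, hx1] using (lp.tendsto_norm_add_rpow_sub_norm_rpow hp' v hwb hw).const_sub 1
  have hB : Tendsto (fun n => ‖T (w n)‖ ^ q.toReal) atTop
      (𝓝 (‖T‖ ^ q.toReal - ‖T v‖ ^ q.toReal)) := by
    have hTwb n : ‖T (w n)‖ ≤ ‖T‖ * (1 + ‖v‖) := T.le_of_opNorm_le_of_le le_rfl (hwb n)
    simpa [w] using ((hmax.comp hφ).rpow_const (Or.inr hq0.le)).sub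
      (lp.tendsto_norm_add_rpow_sub_norm_rpow hq' (T v) hTwb hTw)
  have hv1 : ‖v‖ ≤ 1 := lp.norm_le_of_tendsto (Eventually.of_forall fun n => (hx1 _).le) hxv
  exact T.exists_norm_eq_one_norm_apply_eq_opNorm_of_opNorm_mul_le hv0 <|
    mul_le_of_forall_nat_mul_sub_rpow_le (norm_nonneg _) (norm_nonneg _) hv1 (norm_nonneg _)
      (ENNReal.toReal_pos (zero_lt_one.trans hp).ne' hp') hq0
      (lp.nat_mul_le_opNorm_rpow_mul hp' hq' T hwb hw hTw hτ hB)
end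

section
/- For every r > 1 and every ε > 0 there exists a constant C_ε > 0 such that for all x ∈ ℝ: | |x|^r − |x−1|^r − 1 | ≤ C_ε |x−1|^{r−1} + ε^r + sup_{|t−1| ≤ ε} | |t|^r − 1 |. -/
open Real

/-- Key MVT-type bound via Bernoulli: for `0 ≤ a ≤ b` and `1 ≤ r`,
`b ^ r - a ^ r ≤ r * b ^ (r - 1) * (b - a)`. -/
lemma aux_rpow_sub_rpow_le (r : ℝ) (hr : 1 ≤ r) {a b : ℝ} (ha : 0 ≤ a) (hab : a ≤ b) :
    b ^ r - a ^ r ≤ r * b ^ (r - 1) * (b - a) := by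
  have hb : 0 ≤ b := ha.trans hab
  rcases eq_or_lt_of_le hb with hb0 | hb0
  · have ha0 : a = 0 := le_antisymm (hab.trans hb0.ge) ha
    simp [← hb0, ha0]
  · have hs : (-1 : ℝ) ≤ a / b - 1 := by
      have : 0 ≤ a / b := div_nonneg ha hb
      linarith
    have hber := one_add_mul_self_le_rpow_one_add hs hr
    have h1 : (1 : ℝ) + (a / b - 1) = a / b := by ring
    rw [h1] at hber
    have hdiv : (a / b) ^ r = a ^ r / b ^ r := Real.div_rpow ha hb r
    rw [hdiv] at hber
    have hbr : 0 < b ^ r := Real.rpow_pos_of_pos hb0 r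
    have hber' : (1 + r * (a / b - 1)) * b ^ r ≤ a ^ r := (le_div_iff₀ hbr).mp hber
    have hbsplit : b ^ r = b ^ (r - 1) * b := by
      rw [← Real.rpow_add_one (ne_of_gt hb0)]; ring_nf
    have hab' : (a / b - 1) * b = a - b := by field_simp
    have e : (a / b - 1) * b ^ r = (a - b) * b ^ (r - 1) := by
      rw [hbsplit, ← hab']; ring
    have expand : (1 + r * (a / b - 1)) * b ^ r = b ^ r + r * ((a / b - 1) * b ^ r) := by
      ring
    rw [expand, e] at hber'
    linarith

/-- for every `r > 1` and `ε > 0` there is `C_ε > 0` such that for all real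
`x`, `||x|^r − |x−1|^r − 1| ≤ C_ε |x−1|^{r−1} + ε^r + sup_{|t−1| ≤ ε} ||t|^r − 1|`. -/
theorem real_inequality (r : ℝ) (hr : 1 < r) (ε : ℝ) (hε : 0 < ε) :
    ∃ C : ℝ, 0 < C ∧ ∀ x : ℝ,
      |(|x| ^ r) - |x - 1| ^ r - 1| ≤
        C * |x - 1| ^ (r - 1) + ε ^ r +
          sSup {s : ℝ | ∃ t : ℝ, |t - 1| ≤ ε ∧ s = |(|t| ^ r) - 1|} := by
  set A : Set ℝ := {s : ℝ | ∃ t : ℝ, |t - 1| ≤ ε ∧ s = |(|t| ^ r) - 1|} with hA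
  have hr0 : (0 : ℝ) ≤ r := by linarith
  have hr1 : (0 : ℝ) ≤ r - 1 := by linarith
  have hbdd : BddAbove A := by
    refine ⟨(1 + ε) ^ r + 1, ?_⟩
    rintro s ⟨t, ht, rfl⟩
    have htb : |t| ≤ 1 + ε := by
      have := abs_sub_abs_le_abs_sub t 1
      simp only [abs_one] at this
      linarith
    have h1 : |t| ^ r ≤ (1 + ε) ^ r := Real.rpow_le_rpow (abs_nonneg t) htb hr0
    have h2 : (0 : ℝ) ≤ |t| ^ r := Real.rpow_nonneg (abs_nonneg t) r
    rw [abs_le]; constructor <;> nlinarith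
  have hmem : (0 : ℝ) ∈ A := ⟨1, by simp [abs_le, hε.le], by norm_num⟩
  have hS0 : 0 ≤ sSup A := le_csSup hbdd hmem
  refine ⟨r * (1 + ε⁻¹) ^ (r - 1) + ε ^ (1 - r), by positivity, fun x => ?_⟩
  set C : ℝ := r * (1 + ε⁻¹) ^ (r - 1) + ε ^ (1 - r) with hC
  have hεr : (0 : ℝ) ≤ ε ^ r := Real.rpow_nonneg hε.le r
  rcases le_or_gt |x - 1| ε with hcase | hcase
  · -- |x-1| ≤ ε : use the sup term and ε^r
    have h1 : |(|x| ^ r) - 1| ≤ sSup A := le_csSup hbdd ⟨x, hcase, rfl⟩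
    have h2 : |x - 1| ^ r ≤ ε ^ r := Real.rpow_le_rpow (abs_nonneg _) hcase hr0
    have h3 : (0 : ℝ) ≤ |x - 1| ^ r := Real.rpow_nonneg (abs_nonneg _) r
    have h4 : (0 : ℝ) ≤ C * |x - 1| ^ (r - 1) := by
      have : (0 : ℝ) ≤ |x - 1| ^ (r - 1) := Real.rpow_nonneg (abs_nonneg _) _
      have hCpos : (0 : ℝ) < C := by rw [hC]; positivity
      positivity
    have h5 : |(|x| ^ r) - |x - 1| ^ r - 1| ≤ |(|x| ^ r) - 1| + |x - 1| ^ r := by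
      have := abs_sub (|x| ^ r - 1) (|x - 1| ^ r)
      have heq : (|x| ^ r) - |x - 1| ^ r - 1 = (|x| ^ r - 1) - |x - 1| ^ r := by ring
      rw [heq]
      calc |(|x| ^ r - 1) - |x - 1| ^ r| ≤ |(|x| ^ r - 1)| + |(|x - 1| ^ r)| :=
            abs_sub _ _
        _ = |(|x| ^ r) - 1| + |x - 1| ^ r := by rw [abs_of_nonneg h3]
    linarith
  · -- ε < |x-1| : absorb everything in C * |x-1|^(r-1)
    have hd0 : (0 : ℝ) < |x - 1| := hε.trans hcase
    -- |  |x|^r - |x-1|^r | ≤ r * (|x-1| + 1)^(r-1)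
    have hkey : |(|x| ^ r) - |x - 1| ^ r| ≤ r * (|x - 1| + 1) ^ (r - 1) := by
      have hdiff : |(|x| - |x - 1|)| ≤ 1 := by
        have h := abs_abs_sub_abs_le_abs_sub x (x - 1)
        simpa using h
      rw [abs_le] at hdiff
      rw [abs_le]
      constructor
      · rcases le_total |x| |x - 1| with hle | hle
        · have hb := aux_rpow_sub_rpow_le r hr.le (abs_nonneg x) hle
          have hmono : |x - 1| ^ (r - 1) ≤ (|x - 1| + 1) ^ (r - 1) :=
            Real.rpow_le_rpow (abs_nonneg _) (by linarith) hr1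
          have hpos : (0 : ℝ) ≤ |x - 1| ^ (r - 1) := Real.rpow_nonneg (abs_nonneg _) _
          have hstep : r * |x - 1| ^ (r - 1) * (|x - 1| - |x|) ≤ r * |x - 1| ^ (r - 1) * 1 :=
            mul_le_mul_of_nonneg_left (by linarith [hdiff.1]) (by positivity)
          have hstep2 : r * |x - 1| ^ (r - 1) ≤ r * (|x - 1| + 1) ^ (r - 1) :=
            mul_le_mul_of_nonneg_left hmono hr0
          linarith
        · have hb : (0 : ℝ) ≤ |x| ^ r - |x - 1| ^ r := by
            have := Real.rpow_le_rpow (abs_nonneg _) hle hr0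
            linarith
          have : (0 : ℝ) ≤ r * (|x - 1| + 1) ^ (r - 1) := by
            have := Real.rpow_nonneg (show (0:ℝ) ≤ |x - 1| + 1 by positivity) (r - 1)
            positivity
          linarith
      · rcases le_total |x| |x - 1| with hle | hle
        · have hb : |x| ^ r - |x - 1| ^ r ≤ 0 := by
            have := Real.rpow_le_rpow (abs_nonneg _) hle hr0
            linarith
          have : (0 : ℝ) ≤ r * (|x - 1| + 1) ^ (r - 1) := by
            have := Real.rpow_nonneg (show (0:ℝ) ≤ |x - 1| + 1 by positivity) (r - 1)
            positivity
          linarith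
        · have hb := aux_rpow_sub_rpow_le r hr.le (abs_nonneg (x - 1)) hle
          have hmono : |x| ^ (r - 1) ≤ (|x - 1| + 1) ^ (r - 1) :=
            Real.rpow_le_rpow (abs_nonneg _) (by linarith) hr1
          have hpos : (0 : ℝ) ≤ |x| ^ (r - 1) := Real.rpow_nonneg (abs_nonneg _) _
          have hstep : r * |x| ^ (r - 1) * (|x| - |x - 1|) ≤ r * |x| ^ (r - 1) * 1 :=
            mul_le_mul_of_nonneg_left hdiff.2 (by positivity)
          have hstep2 : r * |x| ^ (r - 1) ≤ r * (|x - 1| + 1) ^ (r - 1) :=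
            mul_le_mul_of_nonneg_left hmono hr0
          linarith
    -- (|x-1|+1)^(r-1) ≤ (1+ε⁻¹)^(r-1) * |x-1|^(r-1)
    have hbound1 : (|x - 1| + 1) ^ (r - 1) ≤ (1 + ε⁻¹) ^ (r - 1) * |x - 1| ^ (r - 1) := by
      have h1 : |x - 1| + 1 ≤ (1 + ε⁻¹) * |x - 1| := by
        have : 1 ≤ ε⁻¹ * |x - 1| := by
          rw [← div_eq_inv_mul, le_div_iff₀ hε]
          linarith
        nlinarith
      calc (|x - 1| + 1) ^ (r - 1) ≤ ((1 + ε⁻¹) * |x - 1|) ^ (r - 1) :=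
            Real.rpow_le_rpow (by positivity) h1 hr1
        _ = (1 + ε⁻¹) ^ (r - 1) * |x - 1| ^ (r - 1) :=
            Real.mul_rpow (by positivity) (abs_nonneg _)
    -- 1 ≤ ε^(1-r) * |x-1|^(r-1)
    have hbound2 : (1 : ℝ) ≤ ε ^ (1 - r) * |x - 1| ^ (r - 1) := by
      have h1 : (1 : ℝ) ≤ (|x - 1| / ε) ^ (r - 1) :=
        Real.one_le_rpow (by rw [le_div_iff₀ hε]; linarith) hr1
      have h2 : (|x - 1| / ε) ^ (r - 1) = |x - 1| ^ (r - 1) / ε ^ (r - 1) :=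
        Real.div_rpow (abs_nonneg _) hε.le (r - 1)
      have h3 : ε ^ (1 - r) = (ε ^ (r - 1))⁻¹ := by
        rw [show (1 - r) = -(r - 1) by ring, Real.rpow_neg hε.le]
      rw [h3]
      rw [h2, div_eq_inv_mul] at h1
      linarith [h1]
    have hSlast : |(|x| ^ r) - |x - 1| ^ r - 1| ≤ |(|x| ^ r) - |x - 1| ^ r| + 1 := by
      calc |(|x| ^ r) - |x - 1| ^ r - 1| ≤ |(|x| ^ r) - |x - 1| ^ r| + |(1:ℝ)| := abs_sub _ _
        _ = |(|x| ^ r) - |x - 1| ^ r| + 1 := by norm_num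
    have hfin : |(|x| ^ r) - |x - 1| ^ r - 1| ≤ C * |x - 1| ^ (r - 1) := by
      have hrpos : (0 : ℝ) < r := by linarith
      calc |(|x| ^ r) - |x - 1| ^ r - 1|
          ≤ r * (|x - 1| + 1) ^ (r - 1) + 1 := by linarith
        _ ≤ r * ((1 + ε⁻¹) ^ (r - 1) * |x - 1| ^ (r - 1)) + ε ^ (1 - r) * |x - 1| ^ (r - 1) := by
            have := mul_le_mul_of_nonneg_left hbound1 hrpos.le
            linarith
        _ = C * |x - 1| ^ (r - 1) := by rw [hC]; ring
    linarith
end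

section
/- Let H₁, H₂ be Hilbert spaces and T : H₁ → H₂ a bounded linear operator. If there exists a maximizing sequence for T that does not converge weakly to 0, then T attains its norm. (In particular, the pair (H₁, H₂) has the weak maximizing property.) -/
open Filter Topology

/-- a bounded linear operator between Hilbert spaces admitting a maximizing
sequence that does not converge weakly to `0` attains its norm (the weak maximizing
property of any pair of Hilbert spaces). -/
theorem hilbert_weak_maximizing {𝕜 H₁ H₂ : Type*} [RCLike 𝕜]
    [NormedAddCommGroup H₁] [InnerProductSpace 𝕜 H₁] [CompleteSpace H₁]
    [NormedAddCommGroup H₂] [InnerProductSpace 𝕜 H₂] [CompleteSpace H₂]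
    (T : H₁ →L[𝕜] H₂) (u : ℕ → H₁)
    (hu1 : ∀ n, ‖u n‖ = 1)
    (hmax : Tendsto (fun n => ‖T (u n)‖) atTop (𝓝 ‖T‖))
    (hnw : ¬ ∀ y : H₁, Tendsto (fun n => (inner 𝕜 (u n) y : 𝕜)) atTop (𝓝 0)) :
    ∃ x₀, ‖x₀‖ = 1 ∧ ‖T x₀‖ = ‖T‖ := by
  classical
  set S : H₁ →L[𝕜] H₁ := (ContinuousLinearMap.adjoint T).comp T with hS
  set M : ℝ := ‖T‖ ^ 2 with hMdef
  have hM0 : 0 ≤ M := by positivity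
  set A : H₁ →L[𝕜] H₁ := S - (M : 𝕜) • ContinuousLinearMap.id 𝕜 H₁ with hAdef
  have hAapp : ∀ x, A x = S x - (M : 𝕜) • x := fun x => rfl
  -- self-adjointness-type identity
  have hSsym : ∀ x y : H₁, (inner 𝕜 (S x) y : 𝕜) = inner 𝕜 x (S y) := by
    intro x y
    have h1 : (inner 𝕜 (S x) y : 𝕜) = inner 𝕜 (T x) (T y) :=
      ContinuousLinearMap.adjoint_inner_left T y (T x)
    have h2 : (inner 𝕜 x (S y) : 𝕜) = inner 𝕜 (T x) (T y) :=
      ContinuousLinearMap.adjoint_inner_right T x (T y)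
    rw [h1, h2]
  have hAsym : ∀ x y : H₁, (inner 𝕜 (A x) y : 𝕜) = inner 𝕜 x (A y) := by
    intro x y
    simp only [hAapp, inner_sub_left, inner_sub_right, inner_smul_left, inner_smul_right,
      RCLike.conj_ofReal, hSsym]
  -- step 1 : ‖A (u n)‖ → 0
  have hAn : Tendsto (fun n => ‖A (u n)‖) atTop (𝓝 0) := by
    have hbound : ∀ n, ‖A (u n)‖ ^ 2 ≤ 2 * M ^ 2 - 2 * M * ‖T (u n)‖ ^ 2 := by
      intro n
      have hnorm : ‖S (u n)‖ ≤ M := by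
        calc ‖S (u n)‖ ≤ ‖S‖ * ‖u n‖ := S.le_opNorm _
        _ = ‖S‖ := by rw [hu1 n, mul_one]
        _ = M := by rw [hS, ContinuousLinearMap.norm_adjoint_comp_self, hMdef, sq]
      have hre : RCLike.re (inner 𝕜 (S (u n)) ((M : 𝕜) • u n) : 𝕜) = M * ‖T (u n)‖ ^ 2 := by
        rw [inner_smul_right]
        have : (inner 𝕜 (S (u n)) (u n) : 𝕜) = inner 𝕜 (T (u n)) (T (u n)) :=
          ContinuousLinearMap.adjoint_inner_left T (u n) (T (u n))
        rw [RCLike.re_ofReal_mul, this, inner_self_eq_norm_sq]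
      have hexp := @norm_sub_sq 𝕜 H₁ _ _ _ (S (u n)) ((M : 𝕜) • u n)
      have hsm : ‖(M : 𝕜) • u n‖ = M := by
        rw [norm_smul, hu1 n, mul_one, RCLike.norm_ofReal, abs_of_nonneg hM0]
      rw [hAapp]
      calc ‖S (u n) - (M : 𝕜) • u n‖ ^ 2
          = ‖S (u n)‖ ^ 2 - 2 * (M * ‖T (u n)‖ ^ 2) + M ^ 2 := by rw [hexp, hre, hsm]
        _ ≤ M ^ 2 - 2 * (M * ‖T (u n)‖ ^ 2) + M ^ 2 := by
            have : ‖S (u n)‖ ^ 2 ≤ M ^ 2 := by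
              apply pow_le_pow_left₀ (norm_nonneg _) hnorm
            linarith
        _ = 2 * M ^ 2 - 2 * M * ‖T (u n)‖ ^ 2 := by ring
    have hg : Tendsto (fun n => 2 * M ^ 2 - 2 * M * ‖T (u n)‖ ^ 2) atTop (𝓝 0) := by
      have h1 : Tendsto (fun n => ‖T (u n)‖ ^ 2) atTop (𝓝 M) := by
        simpa [hMdef] using (hmax.pow 2)
      have h2 := (tendsto_const_nhds (x := 2 * M ^ 2)).sub (h1.const_mul (2 * M))
      have h3 : (0 : ℝ) = 2 * M ^ 2 - 2 * M * M := by ring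
      rw [h3]
      simpa [mul_assoc] using h2
    have hsq : Tendsto (fun n => ‖A (u n)‖ ^ 2) atTop (𝓝 0) :=
      squeeze_zero (fun n => by positivity) hbound hg
    have := hsq.sqrt
    simpa [Real.sqrt_sq (norm_nonneg _)] using this
  -- step 2 : kernel of A is nontrivial
  have hker : ∃ x : H₁, x ≠ 0 ∧ A x = 0 := by
    by_contra hcon
    push_neg at hcon
    apply hnw
    -- range of A is dense
    have hdense : (LinearMap.range (A : H₁ →ₗ[𝕜] H₁)).topologicalClosure = ⊤ := by
      rw [Submodule.topologicalClosure_eq_top_iff]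
      rw [Submodule.eq_bot_iff]
      intro z hz
      have hAz : A z = 0 := by
        have h := (Submodule.mem_orthogonal _ z).mp hz (A (A z)) ⟨A z, rfl⟩
        rw [hAsym] at h
        exact inner_self_eq_zero.mp h
      by_contra hz0
      exact hcon z hz0 hAz
    intro y
    rw [Metric.tendsto_atTop]
    intro ε hε
    have hy : y ∈ closure ((LinearMap.range (A : H₁ →ₗ[𝕜] H₁)) : Set H₁) := by
      have : y ∈ (LinearMap.range (A : H₁ →ₗ[𝕜] H₁)).topologicalClosure := by
        rw [hdense]; trivial
      exact this
    obtain ⟨v, hvmem, hvd⟩ := Metric.mem_closure_iff.mp hy (ε / 2) (by linarith)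
    obtain ⟨w, rfl⟩ := hvmem
    obtain ⟨N, hN⟩ := (Metric.tendsto_atTop.mp hAn) (ε / 2 / (‖w‖ + 1)) (by positivity)
    refine ⟨N, fun n hn => ?_⟩
    have h1 : ‖(inner 𝕜 (u n) y : 𝕜)‖ ≤ ‖(inner 𝕜 (A (u n)) w : 𝕜)‖ + ‖(inner 𝕜 (u n) (y - A w) : 𝕜)‖ := by
      have : (inner 𝕜 (u n) y : 𝕜) = inner 𝕜 (A (u n)) w + inner 𝕜 (u n) (y - A w) := by
        rw [hAsym, ← inner_add_right]
        congr 1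
        abel
      rw [this]
      exact norm_add_le _ _
    have h2 : ‖(inner 𝕜 (A (u n)) w : 𝕜)‖ ≤ ‖A (u n)‖ * ‖w‖ := norm_inner_le_norm _ _
    have h3 : ‖(inner 𝕜 (u n) (y - A w) : 𝕜)‖ ≤ ‖y - A w‖ := by
      have := norm_inner_le_norm (𝕜 := 𝕜) (u n) (y - A w)
      rwa [hu1 n, one_mul] at this
    have h4 : ‖A (u n)‖ < ε / 2 / (‖w‖ + 1) := by
      have := hN n hn
      rwa [Real.dist_eq, sub_zero, abs_of_nonneg (norm_nonneg _)] at this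
    have h5 : ‖A (u n)‖ * ‖w‖ < ε / 2 := by
      calc ‖A (u n)‖ * ‖w‖ ≤ (ε / 2 / (‖w‖ + 1)) * ‖w‖ := by
            apply mul_le_mul_of_nonneg_right h4.le (norm_nonneg _)
        _ < ε / 2 := by
            rw [div_mul_eq_mul_div, div_lt_iff₀ (by positivity)]
            have : ‖w‖ < ‖w‖ + 1 := by linarith
            nlinarith [norm_nonneg w, hε]
    have h6 : ‖y - A w‖ < ε / 2 := by
      rw [← dist_eq_norm]; exact hvd
    rw [dist_eq_norm, sub_zero]
    calc ‖(inner 𝕜 (u n) y : 𝕜)‖ ≤ ‖(inner 𝕜 (A (u n)) w : 𝕜)‖ + ‖(inner 𝕜 (u n) (y - A w) : 𝕜)‖ := h1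
      _ ≤ ‖A (u n)‖ * ‖w‖ + ‖y - A w‖ := add_le_add h2 h3
      _ < ε / 2 + ε / 2 := add_lt_add h5 h6
      _ = ε := by ring
  -- step 3 : conclude
  obtain ⟨x, hx0, hAx⟩ := hker
  have hSx : S x = (M : 𝕜) • x := by
    have h := hAapp x
    rw [hAx] at h
    exact (sub_eq_zero.mp h.symm)
  have hTx2 : ‖T x‖ ^ 2 = (‖T‖ * ‖x‖) ^ 2 := by
    have h1 : (inner 𝕜 (S x) x : 𝕜) = inner 𝕜 (T x) (T x) :=
      ContinuousLinearMap.adjoint_inner_left T x (T x)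
    have h2 : RCLike.re (inner 𝕜 (S x) x : 𝕜) = ‖T x‖ ^ 2 := by
      rw [h1, inner_self_eq_norm_sq]
    have h3 : RCLike.re (inner 𝕜 (S x) x : 𝕜) = M * ‖x‖ ^ 2 := by
      rw [hSx, inner_smul_left, RCLike.conj_ofReal, RCLike.re_ofReal_mul,
        inner_self_eq_norm_sq]
    rw [h2] at h3
    rw [h3, hMdef]
    ring
  have hTx : ‖T x‖ = ‖T‖ * ‖x‖ := by
    have := congrArg Real.sqrt hTx2
    rwa [Real.sqrt_sq (norm_nonneg _), Real.sqrt_sq (by positivity)] at this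
  have hxn : ‖x‖ ≠ 0 := fun h => hx0 (norm_eq_zero.mp h)
  refine ⟨((‖x‖⁻¹ : ℝ) : 𝕜) • x, ?_, ?_⟩
  · rw [norm_smul, RCLike.norm_ofReal, abs_of_nonneg (by positivity), inv_mul_cancel₀ hxn]
  · rw [map_smul, norm_smul, RCLike.norm_ofReal, abs_of_nonneg (by positivity), hTx]
    field_simp
end

section
/- Let 1 ≤ q < p < ∞ and let Γ₁, Γ₂ be arbitrary index sets. Then every bounded linear operator T : ℓ_p(Γ₁) → ℓ_q(Γ₂) is compact. -/
/-!
`T` is the operator-norm limit of the finite-rank operators `T ∘ P_F`, where `P_F` projects onto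
the coordinates in a finite set `F`. If not, a gliding hump in `ℓ_p` produces disjointly supported
`u_k` in the unit ball with `‖T u_k‖ ≥ ε`. Such a sequence is weakly null, because
`∑_{k<n} |f(u_k)| ≤ ‖f‖ n^{1/p}` and `p > 1`; so `T u_k → 0` coordinatewise, and a second gliding
hump makes a subsequence of `T u_k` almost disjointly supported in `ℓ_q`. Summing `N` terms of the
subsequence gives `ε N^{1/q} ≲ ‖T‖ N^{1/p}`, which fails for large `N` because `q < p`.
-/

open scoped ENNReal lp
open Filter Topology Function

theorem Finset.apply_sum_of_pairwise_eq_zero_or {ι M N : Type*} [AddCommMonoid M]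
    [AddCommMonoid N] (g : M → N) (hg : g 0 = 0) (s : Finset ι) {f : ι → M}
    (hf : Pairwise fun j k => f j = 0 ∨ f k = 0) :
    g (∑ j ∈ s, f j) = ∑ j ∈ s, g (f j) := by
  by_cases h : ∃ j ∈ s, f j ≠ 0
  · obtain ⟨j, hj, hfj⟩ := h
    have hzero : ∀ k ∈ s, k ≠ j → f k = 0 := fun k _ hkj => (hf hkj).resolve_right hfj
    rw [Finset.sum_eq_single_of_mem j hj hzero,
      Finset.sum_eq_single_of_mem j hj fun k hk hkj => by rw [hzero k hk hkj, hg]]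
  · push Not at h
    rw [Finset.sum_eq_zero h, hg, Finset.sum_eq_zero fun j hj => by rw [h j hj, hg]]

theorem Monotone.pairwise_disjoint_sdiff_succ {α : Type*} [GeneralizedBooleanAlgebra α]
    {A : ℕ → α} (hA : Monotone A) : Pairwise (Disjoint on fun j => A (j + 1) \ A j) := by
  intro j k hjk
  wlog h : j < k generalizing j k
  · exact (this hjk.symm (hjk.lt_or_gt.resolve_left h)).symm
  exact disjoint_sdiff_self_right.mono_left (sdiff_le.trans (hA h))

theorem exists_nat_mul_rpow_lt {a b : ℝ} (hba : b < a) (C : ℝ) {c : ℝ} (hc : 0 < c) :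
    ∃ n : ℕ, 0 < n ∧ C * (n : ℝ) ^ b < c * (n : ℝ) ^ a := by
  have hgrow : Tendsto (fun n : ℕ => (n : ℝ) ^ (a - b)) atTop atTop :=
    (tendsto_rpow_atTop (sub_pos.2 hba)).comp tendsto_natCast_atTop_atTop
  obtain ⟨n, hn, hbig⟩ :=
    ((eventually_gt_atTop 0).and (hgrow.eventually_gt_atTop (C / c))).exists
  have hn' : (0 : ℝ) < n := Nat.cast_pos.2 hn
  refine ⟨n, hn, ?_⟩
  calc C * (n : ℝ) ^ b < c * (n : ℝ) ^ (a - b) * (n : ℝ) ^ b := by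
        gcongr
        rwa [div_lt_iff₀' hc] at hbig
    _ = c * (n : ℝ) ^ a := by rw [mul_assoc, ← Real.rpow_add hn', sub_add_cancel]

theorem exists_strictMono_le_norm_of_not_tendsto {E : Type*} [SeminormedAddCommGroup E]
    {a : ℕ → E} (h : ¬Tendsto a atTop (𝓝 0)) :
    ∃ ε > 0, ∃ φ : ℕ → ℕ, StrictMono φ ∧ ∀ k, ε ≤ ‖a (φ k)‖ := by
  simp only [NormedAddGroup.tendsto_nhds_zero, not_forall, not_eventually, not_lt] at h
  obtain ⟨ε, hε, hfreq⟩ := h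
  exact ⟨ε, hε, extraction_of_frequently_atTop hfreq⟩

theorem RCLike.exists_norm_le_one_mul_eq_norm {𝕜 : Type*} [RCLike 𝕜] (z : 𝕜) :
    ∃ c : 𝕜, ‖c‖ ≤ 1 ∧ c * z = ‖z‖ := by
  rcases eq_or_ne z 0 with rfl | hz
  · exact ⟨0, by simp⟩
  refine ⟨starRingEnd 𝕜 z / ‖z‖, ?_, ?_⟩
  · rw [norm_div, RCLike.norm_conj, RCLike.norm_ofReal, abs_norm,
      div_self (norm_ne_zero_iff.2 hz)]
  · rw [div_mul_eq_mul_div, RCLike.conj_mul, sq, mul_div_assoc,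
      div_self (RCLike.ofReal_ne_zero.2 (norm_ne_zero_iff.2 hz)), mul_one]

namespace lp

section DisjointSupport

variable {Γ E ι : Type*} [NormedAddCommGroup E] {p : ℝ≥0∞} {v : ι → ℓ^p(Γ, E)}

theorem norm_sum_rpow_of_pairwise_disjoint (hp : 0 < p.toReal)
    (hv : Pairwise (Disjoint on fun j => support (v j))) (s : Finset ι) :
    ‖∑ j ∈ s, v j‖ ^ p.toReal = ∑ j ∈ s, ‖v j‖ ^ p.toReal := by
  refine (lp.hasSum_norm hp _).unique ?_
  convert hasSum_sum fun j _ => lp.hasSum_norm hp (v j) using 2 with i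
  rw [lp.coeFn_sum, Finset.sum_apply]
  refine Finset.apply_sum_of_pairwise_eq_zero_or (‖·‖ ^ p.toReal) (by simp [hp.ne']) s ?_
  intro j k hjk
  by_contra! h
  exact Set.disjoint_left.1 (hv hjk) h.1 h.2

theorem norm_sum_le_card_rpow [Fact (1 ≤ p)] (hp : 0 < p.toReal)
    (hv : Pairwise (Disjoint on fun j => support (v j))) {s : Finset ι}
    (hv1 : ∀ j ∈ s, ‖v j‖ ≤ 1) :
    ‖∑ j ∈ s, v j‖ ≤ (s.card : ℝ) ^ p.toReal⁻¹ := by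
  rw [Real.le_rpow_inv_iff_of_pos (norm_nonneg _) (Nat.cast_nonneg _) hp,
    norm_sum_rpow_of_pairwise_disjoint hp hv]
  simpa using Finset.sum_le_card_nsmul s _ 1 fun j hj =>
    Real.rpow_le_one (norm_nonneg _) (hv1 j hj) hp.le

theorem mul_card_rpow_le_norm_sum [Fact (1 ≤ p)] (hp : 0 < p.toReal)
    (hv : Pairwise (Disjoint on fun j => support (v j))) {s : Finset ι} {c : ℝ} (hc : 0 ≤ c)
    (hcv : ∀ j ∈ s, c ≤ ‖v j‖) :
    c * (s.card : ℝ) ^ p.toReal⁻¹ ≤ ‖∑ j ∈ s, v j‖ := by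
  rw [← Real.rpow_le_rpow_iff (by positivity) (norm_nonneg _) hp, Real.mul_rpow hc (by positivity),
    Real.rpow_inv_rpow (Nat.cast_nonneg _) hp.ne', norm_sum_rpow_of_pairwise_disjoint hp hv,
    mul_comm]
  simpa using Finset.card_nsmul_le_sum s _ _ fun j hj => Real.rpow_le_rpow hc (hcv j hj) hp.le

end DisjointSupport

section WeakNull

variable {𝕜 Γ E ι : Type*} [RCLike 𝕜] [NormedAddCommGroup E] [NormedSpace 𝕜 E] {p : ℝ≥0∞}
  [Fact (1 ≤ p)]

theorem sum_norm_apply_le (hp : 0 < p.toReal) (f : ℓ^p(Γ, E) →L[𝕜] 𝕜) {v : ι → ℓ^p(Γ, E)}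
    (hv : Pairwise (Disjoint on fun j => support (v j))) {s : Finset ι}
    (hv1 : ∀ j ∈ s, ‖v j‖ ≤ 1) :
    ∑ j ∈ s, ‖f (v j)‖ ≤ ‖f‖ * (s.card : ℝ) ^ p.toReal⁻¹ := by
  choose c hc1 hc using fun j => RCLike.exists_norm_le_one_mul_eq_norm (f (v j))
  have hcv : Pairwise (Disjoint on fun j => support (c j • v j)) := hv.mono fun j k h => by
    simp only [lp.coeFn_smul]
    exact h.mono (support_const_smul_subset _ _) (support_const_smul_subset _ _)
  calc ∑ j ∈ s, ‖f (v j)‖ = ‖f (∑ j ∈ s, c j • v j)‖ := by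
        simp only [map_sum, map_smul, smul_eq_mul, hc]
        rw [← RCLike.ofReal_sum, RCLike.norm_ofReal,
          abs_of_nonneg (Finset.sum_nonneg fun j _ => norm_nonneg _)]
    _ ≤ ‖f‖ * ‖∑ j ∈ s, c j • v j‖ := f.le_opNorm _
    _ ≤ ‖f‖ * (s.card : ℝ) ^ p.toReal⁻¹ := by
        gcongr
        refine norm_sum_le_card_rpow hp hcv fun j hj => ?_
        exact (norm_smul_le _ _).trans (mul_le_one₀ (hc1 j) (norm_nonneg _) (hv1 j hj))

theorem tendsto_apply_of_pairwise_disjoint (hp : 1 < p.toReal) (f : ℓ^p(Γ, E) →L[𝕜] 𝕜)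
    {v : ℕ → ℓ^p(Γ, E)} (hv : Pairwise (Disjoint on fun j => support (v j)))
    (hv1 : ∀ j, ‖v j‖ ≤ 1) :
    Tendsto (fun j => f (v j)) atTop (𝓝 0) := by
  by_contra h
  obtain ⟨ε, hε, φ, hφ, hεf⟩ := exists_strictMono_le_norm_of_not_tendsto h
  obtain ⟨n, -, hn⟩ := exists_nat_mul_rpow_lt (inv_lt_one_of_one_lt₀ hp) ‖f‖ hε
  have hupper := sum_norm_apply_le (zero_lt_one.trans hp) f (hv.comp_of_injective hφ.injective)
    (s := Finset.range n) fun j _ => hv1 (φ j)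
  have hlower := Finset.card_nsmul_le_sum (Finset.range n) _ ε fun j _ => hεf j
  simp only [Finset.card_range, nsmul_eq_mul] at hupper hlower
  rw [Real.rpow_one] at hn
  linarith [mul_comm ε (n : ℝ)]

end WeakNull

section Proj

variable (𝕜 : Type*) {Γ E : Type*} [NormedField 𝕜] [NormedAddCommGroup E] [NormedSpace 𝕜 E]
  [DecidableEq Γ] {p : ℝ≥0∞} [Fact (1 ≤ p)]

noncomputable def proj (s : Finset Γ) : ℓ^p(Γ, E) →L[𝕜] ℓ^p(Γ, E) :=
  ∑ i ∈ s, (singleContinuousLinearMap 𝕜 (fun _ => E) p i).comp (evalCLM 𝕜 (fun _ => E) p i)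

variable {𝕜}

theorem proj_apply (s : Finset Γ) (x : ℓ^p(Γ, E)) :
    proj 𝕜 s x = ∑ i ∈ s, lp.single p i (x i) := by
  simp [proj, evalCLM]

theorem coeFn_proj (s : Finset Γ) (x : ℓ^p(Γ, E)) :
    ⇑(proj 𝕜 s x) = (s : Set Γ).indicator x := by
  ext i
  rw [proj_apply, lp.coeFn_sum, Finset.sum_apply]
  simp [Finset.sum_pi_single, Set.indicator_apply]

theorem pairwise_disjoint_support_proj {ι : Type*} {B : ι → Finset Γ}
    (hB : Pairwise (Disjoint on B)) (x : ι → ℓ^p(Γ, E)) :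
    Pairwise (Disjoint on fun j => support (proj 𝕜 (B j) (x j))) := hB.mono fun j k h => by
  simp only [coeFn_proj]
  exact (Finset.disjoint_coe.2 h).mono Set.support_indicator_subset Set.support_indicator_subset

theorem norm_proj_le (hp : 0 < p.toReal) (s : Finset Γ) (x : ℓ^p(Γ, E)) :
    ‖proj 𝕜 s x‖ ≤ ‖x‖ := by
  rw [← Real.rpow_le_rpow_iff (norm_nonneg _) (norm_nonneg _) hp, proj_apply,
    lp.norm_sum_single hp]
  exact lp.sum_rpow_le_norm_rpow hp x s

theorem proj_sdiff {s t : Finset Γ} (h : s ⊆ t) :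
    proj 𝕜 (t \ s) = (proj 𝕜 t : ℓ^p(Γ, E) →L[𝕜] ℓ^p(Γ, E)) - proj 𝕜 s :=
  Finset.sum_sdiff_eq_sub h

theorem exists_forall_norm_sub_proj_lt (hp : p ≠ ⊤) (x : ℓ^p(Γ, E)) {δ : ℝ} (hδ : 0 < δ) :
    ∃ s : Finset Γ, ∀ t, s ⊆ t → ‖x - proj 𝕜 t x‖ < δ := by
  have hx : Tendsto (fun s => proj 𝕜 s x) atTop (𝓝 x) := by
    simp only [proj_apply]
    exact lp.hasSum_single hp x
  obtain ⟨s, hs⟩ := Metric.tendsto_atTop.1 hx δ hδ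
  exact ⟨s, fun t hst => by simpa [dist_eq_norm'] using hs t hst⟩

theorem tendsto_proj_of_tendsto_apply {ι : Type*} {l : Filter ι} {y : ι → ℓ^p(Γ, E)}
    (hy : ∀ i, Tendsto (fun k => y k i) l (𝓝 0)) (s : Finset Γ) :
    Tendsto (fun k => proj 𝕜 s (y k)) l (𝓝 0) := by
  have := tendsto_finsetSum s fun i _ =>
    ((isometry_single (E := fun _ => E) (p := p) i).continuous.tendsto 0).comp (hy i)
  simpa [proj_apply, lp.single_zero] using this

theorem isCompactOperator_proj [LocallyCompactSpace E] (s : Finset Γ) :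
    IsCompactOperator (proj 𝕜 s : ℓ^p(Γ, E) →L[𝕜] ℓ^p(Γ, E)) :=
  Submodule.sum_mem (compactOperator (RingHom.id 𝕜) ℓ^p(Γ, E) ℓ^p(Γ, E)) fun i _ =>
    (isCompactOperator_of_locallyCompactSpace_dom (evalCLM 𝕜 (fun _ => E) p i)).clm_comp
      (singleContinuousLinearMap 𝕜 (fun _ => E) p i)

end Proj

section GlidingHump

variable {𝕜 Γ E : Type*} [NormedField 𝕜] [NormedAddCommGroup E] [NormedSpace 𝕜 E]
  [DecidableEq Γ] {p : ℝ≥0∞} [Fact (1 ≤ p)]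

theorem exists_strictMono_small_head_small_tail (hp : p ≠ ⊤) {y : ℕ → ℓ^p(Γ, E)}
    (hy : ∀ i, Tendsto (fun k => y k i) atTop (𝓝 0)) {δ : ℝ} (hδ : 0 < δ) :
    ∃ m : ℕ → ℕ, StrictMono m ∧ ∃ A : ℕ → Finset Γ, Monotone A ∧
      ∀ j, ‖proj 𝕜 (A j) (y (m j))‖ < δ ∧ ‖y (m j) - proj 𝕜 (A (j + 1)) (y (m j))‖ < δ := by
  choose next hnext_gt hnext_small using fun s : ℕ × Finset Γ =>
    ((eventually_gt_atTop s.1).and (NormedAddGroup.tendsto_nhds_zero.1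
      (tendsto_proj_of_tendsto_apply (𝕜 := 𝕜) hy s.2) δ hδ)).exists
  choose tail htail using fun x : ℓ^p(Γ, E) => exists_forall_norm_sub_proj_lt (𝕜 := 𝕜) hp x hδ
  let s : ℕ → ℕ × Finset Γ := fun j =>
    Nat.rec (0, ∅) (fun _ s => (next s, s.2 ∪ tail (y (next s)))) j
  exact ⟨fun j => next (s j), strictMono_nat_of_lt_succ fun j => hnext_gt (s (j + 1)),
    fun j => (s j).2, monotone_nat_of_le_succ fun j => Finset.subset_union_left,
    fun j => ⟨hnext_small (s j), htail _ _ Finset.subset_union_right⟩⟩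

theorem exists_strictMono_norm_sub_proj_lt (hp : p ≠ ⊤) {y : ℕ → ℓ^p(Γ, E)}
    (hy : ∀ i, Tendsto (fun k => y k i) atTop (𝓝 0)) {δ : ℝ} (hδ : 0 < δ) :
    ∃ m : ℕ → ℕ, StrictMono m ∧ ∃ B : ℕ → Finset Γ, Pairwise (Disjoint on B) ∧
      ∀ j, ‖y (m j) - proj 𝕜 (B j) (y (m j))‖ < δ := by
  obtain ⟨m, hm, A, hA, hsmall⟩ :=
    exists_strictMono_small_head_small_tail (𝕜 := 𝕜) hp hy (half_pos hδ)
  refine ⟨m, hm, fun j => A (j + 1) \ A j, hA.pairwise_disjoint_sdiff_succ, fun j => ?_⟩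
  rw [proj_sdiff (hA j.le_succ), sub_apply, sub_sub_eq_add_sub, add_sub_right_comm]
  calc ‖y (m j) - proj 𝕜 (A (j + 1)) (y (m j)) + proj 𝕜 (A j) (y (m j))‖
      ≤ ‖y (m j) - proj 𝕜 (A (j + 1)) (y (m j))‖ + ‖proj 𝕜 (A j) (y (m j))‖ := norm_add_le _ _
    _ < δ / 2 + δ / 2 := add_lt_add (hsmall j).2 (hsmall j).1
    _ = δ := add_halves δ

end GlidingHump

section LowerEstimate

variable {𝕜 Γ : Type*} [NormedField 𝕜] {q : ℝ≥0∞} [Fact (1 ≤ q)]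

theorem exists_strictMono_mul_card_rpow_le_norm_sum (hq : q ≠ ⊤) {y : ℕ → ℓ^q(Γ, 𝕜)}
    (hy : ∀ i, Tendsto (fun k => y k i) atTop (𝓝 0)) {ε : ℝ} (hε : 0 < ε)
    (hyε : ∀ k, ε ≤ ‖y k‖) {N : ℕ} (hN : 0 < N) :
    ∃ m : ℕ → ℕ, StrictMono m ∧ ε / 2 * (N : ℝ) ^ q.toReal⁻¹ ≤ ‖∑ j ∈ Finset.range N, y (m j)‖ := by
  classical
  have hq0 : 0 < q.toReal := ENNReal.toReal_pos (zero_lt_one.trans_le Fact.out).ne' hq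
  have hN' : (1 : ℝ) ≤ N := Nat.one_le_cast.2 hN
  obtain ⟨m, hm, B, hB, hnear⟩ :=
    exists_strictMono_norm_sub_proj_lt (𝕜 := 𝕜) hq hy (δ := ε / (4 * N)) (by positivity)
  set w := fun j => proj 𝕜 (B j) (y (m j))
  have hwlow (j : ℕ) : 3 * ε / 4 ≤ ‖w j‖ := by
    have hδ : ε / (4 * N) ≤ ε / 4 := div_le_div_of_nonneg_left hε.le (by norm_num) (by linarith)
    linarith [hyε (m j), norm_le_norm_add_norm_sub' (y (m j)) (w j), hnear j]
  have hlower := mul_card_rpow_le_norm_sum hq0 (pairwise_disjoint_support_proj hB _)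
    (s := Finset.range N) (by positivity) fun j _ => hwlow j
  rw [Finset.card_range] at hlower
  have herror : ‖∑ j ∈ Finset.range N, (y (m j) - w j)‖ ≤ ε / 4 := by
    refine (norm_sum_le _ _).trans
      ((Finset.sum_le_card_nsmul _ _ _ fun j _ => (hnear j).le).trans ?_)
    rw [Finset.card_range, nsmul_eq_mul]
    exact le_of_eq (by field_simp)
  have htri := norm_sub_le (∑ j ∈ Finset.range N, y (m j)) (∑ j ∈ Finset.range N, (y (m j) - w j))
  rw [← Finset.sum_sub_distrib] at htri
  simp only [sub_sub_cancel] at htri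
  have hNq : ε / 4 ≤ ε / 4 * (N : ℝ) ^ q.toReal⁻¹ :=
    le_mul_of_one_le_right (by positivity) (Real.one_le_rpow hN' (by positivity))
  exact ⟨m, hm, by linarith⟩

end LowerEstimate

section Pitt

variable {𝕜 Γ₁ Γ₂ E : Type*} [RCLike 𝕜] [NormedAddCommGroup E] [NormedSpace 𝕜 E]
  {p q : ℝ≥0∞} [Fact (1 ≤ p)] [Fact (1 ≤ q)]

theorem exists_norm_apply_lt_of_pairwise_disjoint (hqp : q < p) (hp : p ≠ ⊤)
    (T : ℓ^p(Γ₁, E) →L[𝕜] ℓ^q(Γ₂, 𝕜)) {u : ℕ → ℓ^p(Γ₁, E)}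
    (hu : Pairwise (Disjoint on fun k => support (u k))) (hu1 : ∀ k, ‖u k‖ ≤ 1) {ε : ℝ}
    (hε : 0 < ε) : ∃ k, ‖T (u k)‖ < ε := by
  by_contra! hTu
  have hq : q ≠ ⊤ := hqp.ne_top
  have hqp' : q.toReal < p.toReal := (ENNReal.toReal_lt_toReal hq hp).2 hqp
  have hq1 : 1 ≤ q.toReal := by simpa using ENNReal.toReal_mono hq (Fact.out : 1 ≤ q)
  have hq0 : 0 < q.toReal := zero_lt_one.trans_le hq1
  obtain ⟨N, hN, hgrow⟩ :=
    exists_nat_mul_rpow_lt ((inv_lt_inv₀ (hq0.trans hqp') hq0).2 hqp') ‖T‖ (half_pos hε)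
  have hy (i : Γ₂) : Tendsto (fun k => T (u k) i) atTop (𝓝 0) :=
    tendsto_apply_of_pairwise_disjoint (hq1.trans_lt hqp')
      ((evalCLM 𝕜 (fun _ => 𝕜) q i).comp T) hu hu1
  obtain ⟨m, hm, hlower⟩ := exists_strictMono_mul_card_rpow_le_norm_sum hq hy hε hTu hN
  have hupper : ‖∑ j ∈ Finset.range N, T (u (m j))‖ ≤ ‖T‖ * (N : ℝ) ^ p.toReal⁻¹ := by
    rw [← map_sum]
    refine (T.le_opNorm _).trans (mul_le_mul_of_nonneg_left ?_ (norm_nonneg T))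
    simpa using norm_sum_le_card_rpow (hq0.trans hqp') (hu.comp_of_injective hm.injective)
      (s := Finset.range N) fun j _ => hu1 (m j)
  linarith

theorem exists_norm_sub_comp_proj_le [DecidableEq Γ₁] (hqp : q < p) (hp : p ≠ ⊤)
    (T : ℓ^p(Γ₁, E) →L[𝕜] ℓ^q(Γ₂, 𝕜)) {ε : ℝ} (hε : 0 < ε) :
    ∃ F : Finset Γ₁, ‖T - T ∘L proj 𝕜 F‖ ≤ ε := by
  by_contra! hT
  have hp0 : 0 < p.toReal := ENNReal.toReal_pos (zero_lt_one.trans_le Fact.out).ne' hp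
  choose x hx1 hxT using fun F => (T - T ∘L proj 𝕜 F).exists_lt_apply_of_lt_opNorm (hT F)
  set δ := ε / (2 * (‖T‖ + 1)) with hδ
  choose tail htail using fun y : ℓ^p(Γ₁, E) =>
    exists_forall_norm_sub_proj_lt (𝕜 := 𝕜) hp y (δ := δ) (by positivity)
  -- `F (k + 1)` absorbs almost all of `x (F k)`, so the blocks `proj (F (k + 1) \ F k) (x (F k))`
  -- are disjointly supported and their images stay away from zero.
  let F : ℕ → Finset Γ₁ := fun k => Nat.rec ∅ (fun _ F => F ∪ tail (x F)) k
  have hF : Monotone F := monotone_nat_of_le_succ fun k => Finset.subset_union_left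
  obtain ⟨k, hk⟩ := exists_norm_apply_lt_of_pairwise_disjoint hqp hp T
    (pairwise_disjoint_support_proj (𝕜 := 𝕜) hF.pairwise_disjoint_sdiff_succ fun k => x (F k))
    (fun k => (norm_proj_le hp0 _ _).trans (hx1 _).le) (half_pos hε)
  have hsplit : T (proj 𝕜 (F (k + 1) \ F k) (x (F k))) =
      (T - T ∘L proj 𝕜 (F k)) (x (F k)) - T (x (F k) - proj 𝕜 (F (k + 1)) (x (F k))) := by
    simp only [proj_sdiff (hF k.le_succ), sub_apply, ContinuousLinearMap.comp_apply, map_sub]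
    abel
  have htail_small : ‖T (x (F k) - proj 𝕜 (F (k + 1)) (x (F k)))‖ ≤ ε / 2 :=
    calc _ ≤ ‖T‖ * δ := (T.le_opNorm _).trans
          (mul_le_mul_of_nonneg_left (htail _ _ Finset.subset_union_right).le (norm_nonneg T))
      _ ≤ (‖T‖ + 1) * δ := by gcongr; linarith
      _ = ε / 2 := by rw [hδ]; field_simp
  rw [hsplit] at hk
  linarith [norm_sub_norm_le ((T - T ∘L proj 𝕜 (F k)) (x (F k)))
    (T (x (F k) - proj 𝕜 (F (k + 1)) (x (F k)))), hxT (F k)]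

end Pitt

end lp

/-- Pitt's theorem for arbitrary index sets: if `1 ≤ q < p < ∞`, every
bounded linear operator `T : ℓ_p(Γ₁) → ℓ_q(Γ₂)` is compact. -/
theorem pitt_general_index {𝕜 : Type*} [RCLike 𝕜] (p q : ℝ≥0∞)
    [Fact (1 ≤ p)] [Fact (1 ≤ q)] (hqp : q < p) (hp' : p ≠ ⊤)
    (Γ₁ Γ₂ : Type*)
    (T : lp (fun _ : Γ₁ => 𝕜) p →L[𝕜] lp (fun _ : Γ₂ => 𝕜) q) :
    IsCompactOperator T := by
  classical
  refine isClosed_setOfPred_isCompactOperator.closure_subset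
    (Metric.mem_closure_iff.2 fun ε hε => ?_)
  obtain ⟨F, hF⟩ := lp.exists_norm_sub_comp_proj_le hqp hp' T (half_pos hε)
  exact ⟨T ∘L lp.proj 𝕜 F, (lp.isCompactOperator_proj F).clm_comp T,
    by rw [dist_eq_norm]; linarith⟩
end

section
/- Suppose the pair of Banach spaces (E, F) has the weak maximizing property. Let T : E → F be a bounded linear operator and K : E → F a compact linear operator with ‖T‖ < ‖T + K‖. Then T + K attains its norm. -/
/-! A maximizing sequence `xₙ` of `T + K` cannot be weakly null: otherwise `‖K xₙ‖ → 0` by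
compactness of `K`, so `‖(T + K) xₙ‖ ≤ ‖T‖ + ‖K xₙ‖` would force `‖T + K‖ ≤ ‖T‖`. The weak
maximizing property then makes `T + K` attain its norm. -/

open Filter Topology

theorem ContinuousLinearMap.exists_seq_norm_eq_one_tendsto_opNorm {𝕜 E F : Type*} [RCLike 𝕜]
    [NormedAddCommGroup E] [NormedSpace 𝕜 E] [Nontrivial E]
    [NormedAddCommGroup F] [NormedSpace 𝕜 F] (S : E →L[𝕜] F) :
    ∃ x : ℕ → E, (∀ n, ‖x n‖ = 1) ∧ Tendsto (fun n => ‖S (x n)‖) atTop (𝓝 ‖S‖) := by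
  have hne : ((fun x => ‖S x‖) '' Metric.sphere (0 : E) 1).Nonempty :=
    (Set.nonempty_coe_sort.1 (NormedSpace.sphere_nonempty_rclike 𝕜 zero_le_one)).image _
  have hbdd : BddAbove ((fun x => ‖S x‖) '' Metric.sphere (0 : E) 1) := by
    refine ⟨‖S‖, ?_⟩
    rintro - ⟨x, hx, rfl⟩
    simpa using S.le_opNorm_of_le (mem_sphere_zero_iff_norm.1 hx).le
  obtain ⟨u, -, hu, hmem⟩ := exists_seq_tendsto_sSup hne hbdd
  choose x hx hux using hmem
  refine ⟨x, fun n => mem_sphere_zero_iff_norm.1 (hx n), ?_⟩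
  simpa only [hux, S.sSup_sphere_eq_norm] using hu

section WeaklyNull

variable {𝕜 E F ι : Type*} [RCLike 𝕜]
  [NormedAddCommGroup E] [NormedSpace 𝕜 E] [NormedAddCommGroup F] [NormedSpace 𝕜 F]
  {l : Filter ι}

theorem eq_zero_of_mapClusterPt_of_forall_dual_tendsto_zero {y : ι → F} {z : F}
    (hw : ∀ g : F →L[𝕜] 𝕜, Tendsto (fun i => g (y i)) l (𝓝 0)) (hz : MapClusterPt z l y) :
    z = 0 :=
  SeparatingDual.eq_zero_of_forall_dual_eq_zero (R := 𝕜) fun g =>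
    eq_of_nhds_neBot ((hz.continuousAt_comp g.continuous.continuousAt).clusterPt.mono (hw g))

theorem IsCompactOperator.tendsto_zero_of_forall_dual_tendsto_zero {K : E →L[𝕜] F}
    (hK : IsCompactOperator K) {x : ι → E} {r : ℝ} (hb : ∀ i, ‖x i‖ ≤ r)
    (hw : ∀ f : E →L[𝕜] 𝕜, Tendsto (fun i => f (x i)) l (𝓝 0)) :
    Tendsto (fun i => K (x i)) l (𝓝 0) := by
  obtain ⟨C, hC, hKC⟩ := hK.image_closedBall_subset_compact r
  refine hC.tendsto_nhds_of_unique_mapClusterPt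
    (Eventually.of_forall fun i => hKC ⟨x i, mem_closedBall_zero_iff.2 (hb i), rfl⟩)
    fun z _ hz => eq_zero_of_mapClusterPt_of_forall_dual_tendsto_zero (𝕜 := 𝕜) (fun g => ?_) hz
  simpa using hw (g.comp K)

theorem le_opNorm_of_tendsto_norm_add_compact_apply [l.NeBot] {T K : E →L[𝕜] F}
    (hK : IsCompactOperator K) {x : ι → E} (hb : ∀ i, ‖x i‖ ≤ 1)
    (hw : ∀ f : E →L[𝕜] 𝕜, Tendsto (fun i => f (x i)) l (𝓝 0)) {c : ℝ}
    (hc : Tendsto (fun i => ‖(T + K) (x i)‖) l (𝓝 c)) : c ≤ ‖T‖ := by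
  have hKx : Tendsto (fun i => ‖K (x i)‖) l (𝓝 0) := by
    simpa using (hK.tendsto_zero_of_forall_dual_tendsto_zero hb hw).norm
  refine le_of_tendsto_of_tendsto' hc (by simpa using tendsto_const_nhds.add hKx) fun i => ?_
  have hTx : ‖T (x i)‖ ≤ ‖T‖ := by simpa using T.le_opNorm_of_le (hb i)
  calc ‖(T + K) (x i)‖ ≤ ‖T (x i)‖ + ‖K (x i)‖ := norm_add_le _ _
    _ ≤ ‖T‖ + ‖K (x i)‖ := by gcongr

end WeaklyNull

theorem compact_perturbation_attains_norm_general {𝕜 E F : Type*} [RCLike 𝕜]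
    [NormedAddCommGroup E] [NormedSpace 𝕜 E]
    [NormedAddCommGroup F] [NormedSpace 𝕜 F]
    (hWMP : ∀ S : E →L[𝕜] F,
      (∃ x : ℕ → E, (∀ n, ‖x n‖ = 1) ∧
        Tendsto (fun n => ‖S (x n)‖) atTop (𝓝 ‖S‖) ∧
        ¬ ∀ f : E →L[𝕜] 𝕜, Tendsto (fun n => f (x n)) atTop (𝓝 0)) →
      ∃ x₀, ‖x₀‖ = 1 ∧ ‖S x₀‖ = ‖S‖)
    (T K : E →L[𝕜] F) (hK : IsCompactOperator K) (h : ‖T‖ < ‖T + K‖) :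
    ∃ x₀, ‖x₀‖ = 1 ∧ ‖(T + K) x₀‖ = ‖T + K‖ := by
  have : Nontrivial E := by
    by_contra hE
    rw [not_nontrivial_iff_subsingleton] at hE
    simp [Subsingleton.elim (T + K) 0] at h
  obtain ⟨x, hx1, hx⟩ := (T + K).exists_seq_norm_eq_one_tendsto_opNorm
  refine hWMP (T + K) ⟨x, hx1, hx, fun hw => h.not_ge ?_⟩
  exact le_opNorm_of_tendsto_norm_add_compact_apply hK (fun n => (hx1 n).le) hw hx

/-- if the pair `(E, F)` has the weak maximizing property, `T` is bounded
linear, `K` is compact and `‖T‖ < ‖T + K‖`, then `T + K` attains its norm. -/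
theorem compact_perturbation_attains_norm {𝕜 E F : Type*} [RCLike 𝕜]
    [NormedAddCommGroup E] [NormedSpace 𝕜 E] [CompleteSpace E]
    [NormedAddCommGroup F] [NormedSpace 𝕜 F] [CompleteSpace F]
    (hWMP : ∀ S : E →L[𝕜] F,
      (∃ x : ℕ → E, (∀ n, ‖x n‖ = 1) ∧
        Tendsto (fun n => ‖S (x n)‖) atTop (𝓝 ‖S‖) ∧
        ¬ ∀ f : E →L[𝕜] 𝕜, Tendsto (fun n => f (x n)) atTop (𝓝 0)) →
      ∃ x₀, ‖x₀‖ = 1 ∧ ‖S x₀‖ = ‖S‖)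
    (T K : E →L[𝕜] F) (hK : IsCompactOperator K) (h : ‖T‖ < ‖T + K‖) :
    ∃ x₀, ‖x₀‖ = 1 ∧ ‖(T + K) x₀‖ = ‖T + K‖ :=
  compact_perturbation_attains_norm_general hWMP T K hK h
end

section
/- Let H be a Hilbert space, T : H → H a bounded linear operator, and K : H → H a compact linear operator. If ‖T‖ < ‖T + K‖, then T + K attains its norm. -/
/-!
Let `S = T + K`. Take `uₙ` in the unit ball with `‖S uₙ‖ → ‖S‖` and pass to a subsequence along
which `K uₙ` converges. The parallelogram law for `S uₘ ± S uₙ`, with `S uₘ - S uₙ` split as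
`T (uₘ - uₙ) + (K uₘ - K uₙ)`, gives
`(‖S‖² - ‖T‖²) ‖uₘ - uₙ‖² ≤ 2 (‖S‖² - ‖S uₘ‖²) + 2 (‖S‖² - ‖S uₙ‖²) + O(‖K uₘ - K uₙ‖)`,
so the gap `‖T‖ < ‖S‖` makes `uₙ` Cauchy. Its limit `x₀` has `‖S x₀‖ = ‖S‖ > 0` and `‖x₀‖ ≤ 1`,
hence `‖x₀‖ = 1`.
-/

open Filter Topology

theorem ContinuousLinearMap.exists_seq_norm_le_one_tendsto_norm_apply {𝕜 𝕜₂ E F : Type*}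
    [DenselyNormedField 𝕜] [NontriviallyNormedField 𝕜₂] [NormedAddCommGroup E]
    [SeminormedAddCommGroup F] [NormedSpace 𝕜 E] [NormedSpace 𝕜₂ F] {σ₁₂ : 𝕜 →+* 𝕜₂}
    [RingHomIsometric σ₁₂] (f : E →SL[σ₁₂] F) :
    ∃ u : ℕ → E, (∀ n, ‖u n‖ ≤ 1) ∧ Tendsto (fun n => ‖f (u n)‖) atTop (𝓝 ‖f‖) := by
  have hlt (n : ℕ) : ‖f‖ - 1 / ((n : ℝ) + 1) < ‖f‖ := sub_lt_self _ Nat.one_div_pos_of_nat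
  choose u hu hfu using fun n => f.exists_lt_apply_of_lt_opNorm (hlt n)
  have hlow : Tendsto (fun n : ℕ => ‖f‖ - 1 / ((n : ℝ) + 1)) atTop (𝓝 ‖f‖) := by
    simpa using (tendsto_const_nhds (x := ‖f‖)).sub tendsto_one_div_add_atTop_nhds_zero_nat
  exact ⟨u, fun n => (hu n).le, tendsto_of_tendsto_of_tendsto_of_le_of_le hlow tendsto_const_nhds
    (fun n => (hfu n).le) fun n => f.unit_le_opNorm _ (hu n).le⟩

theorem IsCompactOperator.exists_tendsto_comp_subseq {𝕜 𝕜₂ E F : Type*}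
    [NontriviallyNormedField 𝕜] [NontriviallyNormedField 𝕜₂] [SeminormedAddCommGroup E]
    [SeminormedAddCommGroup F] [NormedSpace 𝕜 E] [NormedSpace 𝕜₂ F] {σ₁₂ : 𝕜 →+* 𝕜₂}
    {f : E →ₛₗ[σ₁₂] F} (hf : IsCompactOperator f) {u : ℕ → E} {r : ℝ} (hu : ∀ n, ‖u n‖ ≤ r) :
    ∃ z, ∃ φ : ℕ → ℕ, StrictMono φ ∧ Tendsto (f ∘ u ∘ φ) atTop (𝓝 z) := by
  obtain ⟨C, hC, hfC⟩ := hf.image_closedBall_subset_compact r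
  obtain ⟨z, -, φ, hφ, hz⟩ :=
    hC.tendsto_subseq fun n => hfC ⟨u n, mem_closedBall_zero_iff.2 (hu n), rfl⟩
  exact ⟨z, φ, hφ, hz⟩

section InnerProductSpace

variable {𝕜 H : Type*} [RCLike 𝕜] [NormedAddCommGroup H] [InnerProductSpace 𝕜 H]
  (T K : H →L[𝕜] H)

theorem opNorm_add_sq_sub_sq_mul_norm_sub_sq_le {x y : H} (hx : ‖x‖ ≤ 1) (hy : ‖y‖ ≤ 1) :
    (‖T + K‖ ^ 2 - ‖T‖ ^ 2) * ‖x - y‖ ^ 2 ≤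
      2 * (‖T + K‖ ^ 2 - ‖(T + K) x‖ ^ 2) + 2 * (‖T + K‖ ^ 2 - ‖(T + K) y‖ ^ 2) +
        ‖K x - K y‖ * (4 * ‖T‖ + ‖K x - K y‖) := by
  set S := T + K
  set d := ‖x - y‖
  set e := ‖K x - K y‖
  have hd : d ≤ 2 := (norm_sub_le x y).trans (by linarith)
  have hsum : ‖S x + S y‖ ^ 2 ≤ ‖S‖ ^ 2 * (4 - d ^ 2) := by
    have hxy : ‖x + y‖ ^ 2 + d ^ 2 ≤ 4 := by
      have := parallelogram_law_with_norm 𝕜 x y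
      nlinarith [norm_nonneg x, norm_nonneg y]
    calc ‖S x + S y‖ ^ 2 = ‖S (x + y)‖ ^ 2 := by rw [map_add]
      _ ≤ (‖S‖ * ‖x + y‖) ^ 2 := by gcongr; exact S.le_opNorm _
      _ ≤ ‖S‖ ^ 2 * (4 - d ^ 2) := by rw [mul_pow]; gcongr; linarith
  have hdiff : ‖S x - S y‖ ≤ ‖T‖ * d + e := by
    have : S x - S y = T (x - y) + (K x - K y) := by
      simp only [S, add_apply, map_sub]; abel
    rw [this]
    exact (norm_add_le _ _).trans (by gcongr; exact T.le_opNorm _)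
  have hpar := parallelogram_law_with_norm 𝕜 (S x) (S y)
  nlinarith [norm_nonneg (S x - S y), norm_nonneg T, norm_nonneg (K x - K y),
    mul_le_mul_of_nonneg_left hd (mul_nonneg (norm_nonneg T) (norm_nonneg (K x - K y)))]

theorem cauchySeq_of_tendsto_norm_add_apply (h : ‖T‖ < ‖T + K‖) {u : ℕ → H}
    (hu : ∀ n, ‖u n‖ ≤ 1) (hmax : Tendsto (fun n => ‖(T + K) (u n)‖) atTop (𝓝 ‖T + K‖))
    (hKu : CauchySeq (K ∘ u)) : CauchySeq u := by
  set S := T + K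
  have hgap : 0 < ‖S‖ ^ 2 - ‖T‖ ^ 2 := by nlinarith [norm_nonneg T]
  set defect : ℕ → ℝ := fun n => 2 * (‖S‖ ^ 2 - ‖S (u n)‖ ^ 2)
  set e : ℕ × ℕ → ℝ := fun p => ‖K (u p.1) - K (u p.2)‖
  have hdefect : Tendsto defect atTop (𝓝 0) := by
    have := ((tendsto_const_nhds (x := ‖S‖ ^ 2)).sub (hmax.pow 2)).const_mul 2
    rwa [sub_self, mul_zero] at this
  have he : Tendsto e atTop (𝓝 0) := by
    simpa [dist_eq_norm] using cauchySeq_iff_tendsto_dist_atTop_0.1 hKu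
  have hbound : Tendsto (fun p : ℕ × ℕ =>
      (defect p.1 + defect p.2 + e p * (4 * ‖T‖ + e p)) / (‖S‖ ^ 2 - ‖T‖ ^ 2)) atTop (𝓝 0) := by
    rw [← prod_atTop_atTop_eq] at he ⊢
    simpa using ((((hdefect.comp tendsto_fst).add (hdefect.comp tendsto_snd)).add
      (he.mul (he.const_add (4 * ‖T‖)))).div_const _)
  have hsq : Tendsto (fun p : ℕ × ℕ => ‖u p.1 - u p.2‖ ^ 2) atTop (𝓝 0) :=
    squeeze_zero (fun _ => by positivity) (fun p => (le_div_iff₀ hgap).2 (by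
      rw [mul_comm]; exact opNorm_add_sq_sub_sq_mul_norm_sub_sq_le T K (hu p.1) (hu p.2))) hbound
  rw [cauchySeq_iff_tendsto_dist_atTop_0]
  simpa [dist_eq_norm] using hsq.sqrt

end InnerProductSpace

/-- Kover's theorem: if `T : H → H` is bounded linear on a Hilbert space,
`K : H → H` is compact and `‖T‖ < ‖T + K‖`, then `T + K` attains its norm. -/
theorem kover_compact_perturbation {𝕜 H : Type*} [RCLike 𝕜]
    [NormedAddCommGroup H] [InnerProductSpace 𝕜 H] [CompleteSpace H]
    (T K : H →L[𝕜] H) (hK : IsCompactOperator K) (h : ‖T‖ < ‖T + K‖) :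
    ∃ x₀, ‖x₀‖ = 1 ∧ ‖(T + K) x₀‖ = ‖T + K‖ := by
  set S := T + K
  obtain ⟨u, hu, hmax⟩ := S.exists_seq_norm_le_one_tendsto_norm_apply
  obtain ⟨z, φ, hφ, hKz⟩ := hK.exists_tendsto_comp_subseq hu
  obtain ⟨x₀, hx₀⟩ := cauchySeq_tendsto_of_complete <|
    cauchySeq_of_tendsto_norm_add_apply T K h (fun n => hu (φ n)) (hmax.comp hφ.tendsto_atTop)
      hKz.cauchySeq
  have hSx₀ : ‖S x₀‖ = ‖S‖ :=
    tendsto_nhds_unique ((S.continuous.norm.tendsto x₀).comp hx₀) (hmax.comp hφ.tendsto_atTop)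
  have hx₀_le : ‖x₀‖ ≤ 1 :=
    le_of_tendsto' ((continuous_norm.tendsto x₀).comp hx₀) fun n => hu (φ n)
  have hS_pos : 0 < ‖S‖ := (norm_nonneg T).trans_lt h
  refine ⟨x₀, le_antisymm hx₀_le (le_of_mul_le_mul_left ?_ hS_pos), hSx₀⟩
  calc ‖S‖ * 1 = ‖S x₀‖ := by rw [mul_one, hSx₀]
    _ ≤ ‖S‖ * ‖x₀‖ := S.le_opNorm x₀
end

section
/- Suppose the pair (E, F) has the weak maximizing property with F ≠ {0}. Then for every bounded linear operator T : E → F and every ε > 0 there exists a rank-one bounded linear operator K : E → F with ‖K‖ < ε and ‖T‖ < ‖T + K‖; consequently T + K is norm attaining, so the norm attaining operators are dense in L(E, F). -/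
open Filter Topology Metric

/-!
Choose a unit vector `x₁` with `‖T x₁‖ > ‖T‖ - ε / 2`, a norming functional `φ` at `x₁`, and a
vector `y` of norm `ε / 2` pointing in the direction of `T x₁`. Then `K = φ(·) y` has norm `ε / 2`
and `‖(T + K) x₁‖ = ‖T x₁‖ + ε / 2 > ‖T‖`. Along a weakly null maximizing sequence of `T + K` the
rank-one part `K` tends to `0` in norm, so `‖T + K‖ ≤ ‖T‖`; hence every maximizing sequence of
`T + K` fails to be weakly null, and the weak maximizing property makes `T + K` norm attaining.
-/

section Definitions

variable {𝕜 E F : Type*} [RCLike 𝕜] [NormedAddCommGroup E] [NormedSpace 𝕜 E]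
  [NormedAddCommGroup F] [NormedSpace 𝕜 F]

def ContinuousLinearMap.NormAttaining (S : E →L[𝕜] F) : Prop :=
  ∃ x₀, ‖x₀‖ = 1 ∧ ‖S x₀‖ = ‖S‖

variable (𝕜 E F) in
def WeakMaximizingProperty : Prop :=
  ∀ S : E →L[𝕜] F,
    (∃ x : ℕ → E, (∀ n, ‖x n‖ = 1) ∧
      Tendsto (fun n => ‖S (x n)‖) atTop (𝓝 ‖S‖) ∧
      ¬ ∀ f : E →L[𝕜] 𝕜, Tendsto (fun n => f (x n)) atTop (𝓝 0)) →
    S.NormAttaining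

end Definitions

namespace ContinuousLinearMap

theorem norm_add_le_of_tendsto_apply_zero {𝕜 E F : Type*} [NontriviallyNormedField 𝕜]
    [NormedAddCommGroup E] [NormedSpace 𝕜 E] [NormedAddCommGroup F] [NormedSpace 𝕜 F]
    (T K : E →L[𝕜] F) {x : ℕ → E} (hx : ∀ n, ‖x n‖ ≤ 1)
    (hmax : Tendsto (fun n => ‖(T + K) (x n)‖) atTop (𝓝 ‖T + K‖))
    (hK : Tendsto (fun n => K (x n)) atTop (𝓝 0)) : ‖T + K‖ ≤ ‖T‖ := by
  have hbound : Tendsto (fun n => ‖T‖ + ‖K (x n)‖) atTop (𝓝 ‖T‖) := by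
    simpa using tendsto_const_nhds.add hK.norm
  refine le_of_tendsto_of_tendsto' hmax hbound fun n => ?_
  calc ‖(T + K) (x n)‖ ≤ ‖T (x n)‖ + ‖K (x n)‖ := norm_add_le _ _
    _ ≤ ‖T‖ + ‖K (x n)‖ := by gcongr; exact T.unit_le_opNorm _ (hx n)

variable {𝕜 E F : Type*} [RCLike 𝕜] [NormedAddCommGroup E] [NormedSpace 𝕜 E]
  [NormedAddCommGroup F] [NormedSpace 𝕜 F]

section Sphere

variable [Nontrivial E] (T : E →L[𝕜] F)

theorem nonempty_image_norm_apply_sphere : ((fun x => ‖T x‖) '' sphere (0 : E) 1).Nonempty :=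
  (Set.nonempty_coe_sort.1 (NormedSpace.sphere_nonempty_rclike 𝕜 zero_le_one)).image _

theorem exists_norm_eq_one_lt_norm_apply {r : ℝ} (hr : r < ‖T‖) : ∃ x, ‖x‖ = 1 ∧ r < ‖T x‖ := by
  rw [← T.sSup_sphere_eq_norm] at hr
  obtain ⟨_, ⟨x, hx, rfl⟩, hlt⟩ := exists_lt_of_lt_csSup T.nonempty_image_norm_apply_sphere hr
  exact ⟨x, mem_sphere_zero_iff_norm.1 hx, hlt⟩

theorem exists_seq_norm_eq_one_tendsto_norm_apply :
    ∃ x : ℕ → E, (∀ n, ‖x n‖ = 1) ∧ Tendsto (fun n => ‖T (x n)‖) atTop (𝓝 ‖T‖) := by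
  have hbdd : BddAbove ((fun x => ‖T x‖) '' sphere (0 : E) 1) := by
    refine ⟨‖T‖, ?_⟩
    rintro - ⟨x, hx, rfl⟩
    exact T.unit_le_opNorm x (mem_sphere_zero_iff_norm.1 hx).le
  obtain ⟨u, -, hu, hmem⟩ := exists_seq_tendsto_sSup T.nonempty_image_norm_apply_sphere hbdd
  choose x hx hxu using hmem
  refine ⟨x, fun n => mem_sphere_zero_iff_norm.1 (hx n), ?_⟩
  rwa [T.sSup_sphere_eq_norm, ← funext hxu] at hu

end Sphere

theorem exists_norm_eq_one_norm_add_smul_eq [Nontrivial F] (u : F) :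
    ∃ v : F, ‖v‖ = 1 ∧ ∀ t : ℝ, 0 ≤ t → ‖u + (t : 𝕜) • v‖ = ‖u‖ + t := by
  rcases eq_or_ne u 0 with rfl | hu
  · obtain ⟨v, hv⟩ := NormedSpace.sphere_nonempty_rclike 𝕜 (E := F) zero_le_one
    refine ⟨v, mem_sphere_zero_iff_norm.1 hv, fun t ht => ?_⟩
    simp [norm_smul, mem_sphere_zero_iff_norm.1 hv, abs_of_nonneg ht]
  · have hu' : 0 < ‖u‖ := norm_pos_iff.2 hu
    refine ⟨(‖u‖⁻¹ : 𝕜) • u, norm_smul_inv_norm hu, fun t ht => ?_⟩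
    have : u + (t : 𝕜) • (‖u‖⁻¹ : 𝕜) • u = ((1 + t / ‖u‖ : ℝ) : 𝕜) • u := by
      rw [smul_smul, RCLike.ofReal_add, RCLike.ofReal_one, add_smul, one_smul,
        RCLike.ofReal_div, div_eq_mul_inv]
    rw [this, norm_smul, RCLike.norm_ofReal, abs_of_nonneg (by positivity)]
    field_simp

theorem exists_smulRight_norm_lt_norm_add [Nontrivial E] [Nontrivial F] (T : E →L[𝕜] F) {δ : ℝ}
    (hδ : 0 < δ) :
    ∃ (φ : E →L[𝕜] 𝕜) (y : F), ‖φ‖ = 1 ∧ ‖y‖ = δ ∧ ‖T‖ < ‖T + φ.smulRight y‖ := by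
  obtain ⟨x, hx, hTx⟩ := T.exists_norm_eq_one_lt_norm_apply (r := ‖T‖ - δ) (by linarith)
  obtain ⟨φ, hφ, hφx⟩ := exists_dual_vector 𝕜 x (by simp [hx])
  obtain ⟨v, hv, hadd⟩ := exists_norm_eq_one_norm_add_smul_eq (𝕜 := 𝕜) (T x)
  refine ⟨φ, (δ : 𝕜) • v, hφ, by simp [norm_smul, hv, hδ.le], ?_⟩
  calc ‖T‖ < ‖T x‖ + δ := by linarith
    _ = ‖(T + φ.smulRight ((δ : 𝕜) • v)) x‖ := by simp [hφx, hx, hadd δ hδ.le]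
    _ ≤ _ := unit_le_opNorm _ _ hx.le

end ContinuousLinearMap

theorem WeakMaximizingProperty.normAttaining_add_smulRight {𝕜 E F : Type*} [RCLike 𝕜]
    [NormedAddCommGroup E] [NormedSpace 𝕜 E] [Nontrivial E] [NormedAddCommGroup F]
    [NormedSpace 𝕜 F] (h : WeakMaximizingProperty 𝕜 E F) {T : E →L[𝕜] F} (φ : E →L[𝕜] 𝕜) (y : F)
    (hlt : ‖T‖ < ‖T + φ.smulRight y‖) : (T + φ.smulRight y).NormAttaining := by
  obtain ⟨x, hx, hmax⟩ := (T + φ.smulRight y).exists_seq_norm_eq_one_tendsto_norm_apply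
  refine h _ ⟨x, hx, hmax, fun hweak => hlt.not_ge ?_⟩
  refine T.norm_add_le_of_tendsto_apply_zero _ (fun n => (hx n).le) hmax ?_
  simpa using (hweak φ).smul_const y

theorem rank_one_perturbation_dense_general {𝕜 E F : Type*} [RCLike 𝕜]
    [NormedAddCommGroup E] [NormedSpace 𝕜 E] [Nontrivial E]
    [NormedAddCommGroup F] [NormedSpace 𝕜 F] [Nontrivial F]
    (hWMP : ∀ S : E →L[𝕜] F,
      (∃ x : ℕ → E, (∀ n, ‖x n‖ = 1) ∧
        Tendsto (fun n => ‖S (x n)‖) atTop (𝓝 ‖S‖) ∧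
        ¬ ∀ f : E →L[𝕜] 𝕜, Tendsto (fun n => f (x n)) atTop (𝓝 0)) →
      ∃ x₀, ‖x₀‖ = 1 ∧ ‖S x₀‖ = ‖S‖) :
    ∀ (T : E →L[𝕜] F) (ε : ℝ), 0 < ε →
      ∃ K : E →L[𝕜] F,
        (∃ (φ : E →L[𝕜] 𝕜) (y : F), φ ≠ 0 ∧ y ≠ 0 ∧ ∀ x, K x = φ x • y) ∧
        ‖K‖ < ε ∧ ‖T‖ < ‖T + K‖ ∧
        ∃ x₀, ‖x₀‖ = 1 ∧ ‖(T + K) x₀‖ = ‖T + K‖ := by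
  intro T ε hε
  obtain ⟨φ, y, hφ, hy, hlt⟩ := T.exists_smulRight_norm_lt_norm_add (half_pos hε)
  refine ⟨φ.smulRight y, ⟨φ, y, ?_, ?_, fun _ => rfl⟩, ?_, hlt,
    WeakMaximizingProperty.normAttaining_add_smulRight hWMP φ y hlt⟩
  · rintro rfl
    simp at hφ
  · rintro rfl
    simp only [norm_zero] at hy
    linarith
  · rw [ContinuousLinearMap.norm_smulRight_apply, hφ, hy]
    linarith

/-- if `(E, F)` has the weak maximizing property and `F ≠ {0}`, then for
every bounded `T : E → F` and `ε > 0` there is a rank-one operator `K` with `‖K‖ < ε`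
and `‖T‖ < ‖T + K‖`; consequently `T + K` attains its norm. -/
theorem rank_one_perturbation_dense {𝕜 E F : Type*} [RCLike 𝕜]
    [NormedAddCommGroup E] [NormedSpace 𝕜 E] [CompleteSpace E] [Nontrivial E]
    [NormedAddCommGroup F] [NormedSpace 𝕜 F] [CompleteSpace F] [Nontrivial F]
    (hWMP : ∀ S : E →L[𝕜] F,
      (∃ x : ℕ → E, (∀ n, ‖x n‖ = 1) ∧
        Tendsto (fun n => ‖S (x n)‖) atTop (𝓝 ‖S‖) ∧
        ¬ ∀ f : E →L[𝕜] 𝕜, Tendsto (fun n => f (x n)) atTop (𝓝 0)) →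
      ∃ x₀, ‖x₀‖ = 1 ∧ ‖S x₀‖ = ‖S‖) :
    ∀ (T : E →L[𝕜] F) (ε : ℝ), 0 < ε →
      ∃ K : E →L[𝕜] F,
        (∃ (φ : E →L[𝕜] 𝕜) (y : F), φ ≠ 0 ∧ y ≠ 0 ∧ ∀ x, K x = φ x • y) ∧
        ‖K‖ < ε ∧ ‖T‖ < ‖T + K‖ ∧
        ∃ x₀, ‖x₀‖ = 1 ∧ ‖(T + K) x₀‖ = ‖T + K‖ :=
  rank_one_perturbation_dense_general hWMP
end

section
/- For m ≥ 3, the continuous m-homogeneous polynomial P_m : ℓ₂ → ℝ defined by P_m(x) = x₁^m + m x₁^{m−2} Σ_{j≥2} (j/(j+1)) x_j² has norm ‖P_m‖ = 2((m−2)/(m−1))^{(m−2)/2}, and P_m does not attain its norm. -/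
/-!
Write `m = k + 2` and `r = |x₀|` for a unit vector `x`. Since the weights `(j+2)/(j+3)` are `< 1`,
`|P_m x| ≤ r^m + m r^k (1 - r²)`, strictly unless `x₀ = 0` or `x = ±e₀` (where `|P_m x| = 1`).
By weighted AM-GM this envelope is at most its value `2 (k/(k+1))^{k/2}` at `r² = k/(k+1)`, and
that value exceeds `1` because `(1 + 1/k)^k < e < 4`; so the supremum is never attained. It is
approached along `c e₀ + √(1 - c²) e_{n+1}`, `c² = k/(k+1)`, as the weights tend to `1`.
-/

open Filter Topology
open scoped lp

theorem pow_mul_sq_le_one_of_mean_eq_one {k : ℕ} {u b : ℝ} (hu : 0 ≤ u) (hb : 0 ≤ b)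
    (hmean : k * u + 2 * b = k + 2) : u ^ k * b ^ 2 ≤ 1 := by
  have hk2 : (0 : ℝ) < k + 2 := by positivity
  have hgm := Real.geom_mean_le_arith_mean2_weighted (w₁ := k / (k + 2)) (w₂ := 2 / (k + 2))
    (by positivity) (by positivity) hu hb (by field_simp)
  have hmean' : k / (k + 2) * u + 2 / (k + 2) * b = 1 := by
    field_simp; linarith
  have key := pow_le_one₀ (n := k + 2) (by positivity) (hmean' ▸ hgm)
  rwa [mul_pow, ← Real.rpow_mul_natCast hu, ← Real.rpow_mul_natCast hb, Nat.cast_add,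
    Nat.cast_two, div_mul_cancel₀ _ hk2.ne', div_mul_cancel₀ _ hk2.ne', Real.rpow_natCast,
    Real.rpow_two] at key

/-- The value `P_{k+2}` would take at a unit vector with `|x₀| = r` if all its weights were `1`. -/
def envelope (k : ℕ) (r : ℝ) : ℝ := r ^ (k + 2) + (k + 2) * r ^ k * (1 - r ^ 2)

theorem envelope_sqrt_eq (k : ℕ) : envelope k √(k / (k + 1)) = 2 * √(k / (k + 1)) ^ k := by
  simp only [envelope, pow_add, Real.sq_sqrt (by positivity : (0 : ℝ) ≤ k / (k + 1))]
  field_simp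
  ring

theorem envelope_le_envelope_sqrt {k : ℕ} (hk : 0 < k) {r : ℝ} (hr : 0 ≤ r) :
    envelope k r ≤ envelope k √(k / (k + 1)) := by
  rw [envelope_sqrt_eq]
  set s : ℝ := k / (k + 1)
  have hs : 0 < s := by positivity
  set b := ((k + 2) - (k + 1) * r ^ 2) / 2
  have hr_eq : envelope k r = 2 * (r ^ k * b) := by simp only [envelope, b]; ring
  rw [hr_eq]
  rcases le_or_gt b 0 with hb | hb
  · nlinarith [pow_nonneg hr k, pow_nonneg (Real.sqrt_nonneg s) k]
  -- weighted AM-GM for `k` copies of `r² / s` and two copies of `b`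
  have hamgm : (r ^ 2 / s) ^ k * b ^ 2 ≤ 1 :=
    pow_mul_sq_le_one_of_mean_eq_one (by positivity) hb.le (by simp only [s, b]; field_simp; ring)
  have hsq : (r ^ k * b) ^ 2 ≤ (√s ^ k) ^ 2 := by
    calc (r ^ k * b) ^ 2 = s ^ k * ((r ^ 2 / s) ^ k * b ^ 2) := by
          clear_value s b; rw [div_pow, ← pow_mul]; field_simp; ring
      _ ≤ s ^ k := mul_le_of_le_one_right (by positivity) hamgm
      _ = (√s ^ k) ^ 2 := by rw [← pow_mul, mul_comm, pow_mul, Real.sq_sqrt hs.le]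
  have := (pow_le_pow_iff_left₀ (by positivity) (by positivity) two_ne_zero).1 hsq
  linarith

theorem envelope_sqrt_eq_rpow (k : ℕ) :
    envelope k √(k / (k + 1)) = 2 * ((k : ℝ) / (k + 1)) ^ ((k : ℝ) / 2) := by
  rw [envelope_sqrt_eq, div_eq_inv_mul (k : ℝ) 2, Real.rpow_mul_natCast (by positivity),
    Real.sqrt_eq_rpow, one_div]

theorem one_lt_envelope_sqrt {k : ℕ} (hk : 0 < k) : 1 < envelope k √(k / (k + 1)) := by
  have hk' : (0 : ℝ) < k := by exact_mod_cast hk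
  have he : ((k + 1 : ℝ) / k) ^ k < 4 := by
    calc ((k + 1 : ℝ) / k) ^ k = (1 + (k : ℝ)⁻¹) ^ k := by field_simp
      _ ≤ Real.exp 1 := Real.one_add_inv_pow_le_exp
      _ < 4 := by linarith [Real.exp_one_lt_d9]
  have hsq : (1 / 2 : ℝ) ^ 2 < (√(k / (k + 1)) ^ k) ^ 2 := by
    calc (1 / 2 : ℝ) ^ 2 = 4⁻¹ := by norm_num
      _ < (((k + 1 : ℝ) / k) ^ k)⁻¹ := (inv_lt_inv₀ (by norm_num) (by positivity)).2 he
      _ = (√(k / (k + 1)) ^ k) ^ 2 := by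
        rw [← inv_pow, inv_div, ← pow_mul, mul_comm, pow_mul, Real.sq_sqrt (by positivity)]
  rw [envelope_sqrt_eq]
  have := (pow_lt_pow_iff_left₀ (by positivity) (by positivity) two_ne_zero).1 hsq
  linarith

theorem lp.hasSum_sq {ι : Type*} (x : ℓ²(ι, ℝ)) : HasSum (fun i => x i ^ 2) (‖x‖ ^ 2) := by
  simpa only [real_inner_self_eq_norm_sq, Real.norm_eq_abs, sq_abs] using
    lp.hasSum_inner (𝕜 := ℝ) x x

theorem lp.hasSum_sq_succ (x : ℓ²(ℕ, ℝ)) :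
    HasSum (fun i => x (i + 1) ^ 2) (‖x‖ ^ 2 - x 0 ^ 2) := by
  simpa using (hasSum_nat_add_iff' 1).2 (lp.hasSum_sq x)

theorem tsum_mul_lt_of_lt_one {ι : Type*} {w f : ι → ℝ} {a : ℝ} (hf : HasSum f a)
    (hf0 : ∀ i, 0 ≤ f i) (hw0 : ∀ i, 0 ≤ w i) (hw1 : ∀ i, w i < 1) {j : ι} (hj : f j ≠ 0) :
    ∑' i, w i * f i < a := by
  have hle : ∀ i, w i * f i ≤ f i := fun i => mul_le_of_le_one_left (hf0 i) (hw1 i).le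
  have hsum : Summable fun i => w i * f i :=
    hf.summable.of_nonneg_of_le (fun i => mul_nonneg (hw0 i) (hf0 i)) hle
  exact hasSum_lt hle (mul_lt_of_lt_one_left ((hf0 j).lt_of_ne' hj) (hw1 j)) hsum.hasSum hf

noncomputable def weightedTail (x : ℓ²(ℕ, ℝ)) : ℝ :=
  ∑' i : ℕ, ((i : ℝ) + 2) / (i + 3) * x (i + 1) ^ 2

noncomputable def Pm (m : ℕ) (x : ℓ²(ℕ, ℝ)) : ℝ := x 0 ^ m + m * x 0 ^ (m - 2) * weightedTail x

theorem weightedTail_nonneg (x : ℓ²(ℕ, ℝ)) : 0 ≤ weightedTail x :=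
  tsum_nonneg fun i => by positivity

theorem weightedTail_lt {x : ℓ²(ℕ, ℝ)} {j : ℕ} (hj : x (j + 1) ≠ 0) :
    weightedTail x < ‖x‖ ^ 2 - x 0 ^ 2 :=
  tsum_mul_lt_of_lt_one (lp.hasSum_sq_succ x) (fun _ => sq_nonneg _) (fun _ => by positivity)
    (fun i => (div_lt_one (by positivity)).2 (by linarith)) (pow_ne_zero 2 hj)

theorem abs_Pm_le (k : ℕ) (x : ℓ²(ℕ, ℝ)) :
    |Pm (k + 2) x| ≤ |x 0| ^ (k + 2) + (k + 2) * |x 0| ^ k * weightedTail x := by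
  have hQ := weightedTail_nonneg x
  rw [Pm, Nat.add_sub_cancel, Nat.cast_add, Nat.cast_two]
  calc _ ≤ |x 0 ^ (k + 2)| + |(k + 2) * x 0 ^ k * weightedTail x| := abs_add_le _ _
    _ = _ := by
      rw [abs_mul, abs_mul, abs_pow, abs_pow, abs_of_nonneg hQ,
        abs_of_pos (by positivity : (0 : ℝ) < k + 2)]

theorem abs_Pm_lt_envelope_sqrt {k : ℕ} (hk : 0 < k) {x : ℓ²(ℕ, ℝ)} (hx : ‖x‖ = 1) :
    |Pm (k + 2) x| < envelope k √(k / (k + 1)) := by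
  have hM := one_lt_envelope_sqrt hk
  have hbound := abs_Pm_le k x
  by_cases htail : ∃ j, x (j + 1) ≠ 0
  · obtain ⟨j, hj⟩ := htail
    have hQ : weightedTail x < 1 - |x 0| ^ 2 := by simpa [hx] using weightedTail_lt hj
    rcases (abs_nonneg (x 0)).eq_or_lt with hr | hr
    · rw [← hr, zero_pow (by omega), zero_pow hk.ne'] at hbound
      linarith
    calc |Pm (k + 2) x| ≤ |x 0| ^ (k + 2) + (k + 2) * |x 0| ^ k * weightedTail x := hbound
      _ < envelope k |x 0| := by unfold envelope; gcongr
      _ ≤ envelope k √(k / (k + 1)) := envelope_le_envelope_sqrt hk hr.le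
  · push Not at htail
    have hQ : weightedTail x = 0 := by simp [weightedTail, htail]
    have hx0 : |x 0| = 1 := by
      have h : HasSum (fun _ : ℕ => (0 : ℝ)) (1 - x 0 ^ 2) := by
        simpa [htail, hx] using lp.hasSum_sq_succ x
      have h1 : |x 0| ^ 2 = 1 := by linarith [h.unique hasSum_zero, sq_abs (x 0)]
      exact (pow_eq_one_iff_of_nonneg (abs_nonneg _) two_ne_zero).1 h1
    rw [hQ, hx0] at hbound
    norm_num at hbound
    linarith

noncomputable def testVector (c d : ℝ) (n : ℕ) : ℓ²(ℕ, ℝ) :=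
  lp.single 2 0 c + lp.single 2 (n + 1) d

theorem testVector_zero (c d : ℝ) (n : ℕ) : testVector c d n 0 = c := by
  simp [testVector, lp.single_apply]

theorem testVector_succ (c d : ℝ) (n i : ℕ) :
    testVector c d n (i + 1) = if i = n then d else 0 := by
  simp [testVector, lp.single_apply, Pi.single_apply]

theorem norm_testVector {c d : ℝ} (h : c ^ 2 + d ^ 2 = 1) (n : ℕ) : ‖testVector c d n‖ = 1 := by
  have horth : inner ℝ (lp.single 2 0 c) (lp.single 2 (n + 1) d : ℓ²(ℕ, ℝ)) = 0 := by
    simp [lp.inner_single_left, lp.single_apply]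
  have h2 := norm_add_sq_eq_norm_sq_add_norm_sq_real horth
  rw [lp.norm_single (by norm_num), lp.norm_single (by norm_num), Real.norm_eq_abs,
    Real.norm_eq_abs, abs_mul_abs_self, abs_mul_abs_self] at h2
  refine (pow_eq_one_iff_of_nonneg (norm_nonneg _) two_ne_zero).1 ?_
  rw [testVector, sq, h2, ← h]
  ring

theorem weightedTail_testVector (c d : ℝ) (n : ℕ) :
    weightedTail (testVector c d n) = ((n : ℝ) + 2) / (n + 3) * d ^ 2 := by
  rw [weightedTail, tsum_eq_single n fun i hi => by simp [testVector_succ, hi]]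
  simp [testVector_succ]

theorem tendsto_Pm_testVector (k : ℕ) {c : ℝ} (hc : c ^ 2 ≤ 1) :
    Tendsto (fun n => Pm (k + 2) (testVector c √(1 - c ^ 2) n)) atTop (𝓝 (envelope k c)) := by
  have hw : Tendsto (fun n : ℕ => ((n : ℝ) + 2) / (n + 3)) atTop (𝓝 1) := by
    have := (tendsto_natCast_div_add_atTop (1 : ℝ)).comp (tendsto_add_atTop_nat 2)
    refine this.congr fun n => ?_
    simp only [Function.comp_apply]; push_cast; ring
  have := ((hw.mul_const (1 - c ^ 2)).const_mul ((k + 2) * c ^ k)).const_add (c ^ (k + 2))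
  convert this using 2 with n
  · rw [Pm, testVector_zero, weightedTail_testVector, Real.sq_sqrt (sub_nonneg.2 hc),
      Nat.add_sub_cancel, Nat.cast_add, Nat.cast_two]
  · rw [envelope, one_mul]

/-- for `m ≥ 3`, the `m`-homogeneous polynomial
`P_m(x) = x₁^m + m x₁^{m−2} Σ_{j≥2} (j/(j+1)) x_j²` on real `ℓ₂` (written 0-indexed)
has norm `2((m−2)/(m−1))^{(m−2)/2}` and does not attain its norm. -/
theorem Pm_norm_not_attained (m : ℕ) (hm : 3 ≤ m)
    (P : lp (fun _ : ℕ => ℝ) 2 → ℝ)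
    (hP : ∀ x, P x = ((x : ∀ _ : ℕ, ℝ) 0) ^ m +
      (m : ℝ) * ((x : ∀ _ : ℕ, ℝ) 0) ^ (m - 2) *
        ∑' i : ℕ, (((i : ℝ) + 2) / ((i : ℝ) + 3)) * ((x : ∀ _ : ℕ, ℝ) (i + 1)) ^ 2) :
    sSup {c : ℝ | ∃ x, ‖x‖ = 1 ∧ c = |P x|} =
      2 * (((m : ℝ) - 2) / ((m : ℝ) - 1)) ^ (((m : ℝ) - 2) / 2) ∧
    ¬ ∃ x, ‖x‖ = 1 ∧ |P x| = sSup {c : ℝ | ∃ x, ‖x‖ = 1 ∧ c = |P x|} := by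
  obtain ⟨k, rfl⟩ : ∃ k, m = k + 2 := ⟨m - 2, by omega⟩
  obtain rfl : P = Pm (k + 2) := funext hP
  set c := √((k : ℝ) / (k + 1))
  have hc : c ^ 2 ≤ 1 := by
    rw [Real.sq_sqrt (by positivity), div_le_one (by positivity)]; linarith
  let v := testVector c √(1 - c ^ 2)
  have hv : ∀ n, ‖v n‖ = 1 := norm_testVector (by rw [Real.sq_sqrt (sub_nonneg.2 hc)]; ring)
  have hlt : ∀ x : ℓ²(ℕ, ℝ), ‖x‖ = 1 → |Pm (k + 2) x| < envelope k c :=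
    fun x => abs_Pm_lt_envelope_sqrt (by omega)
  have hM : 0 < envelope k c := one_pos.trans (one_lt_envelope_sqrt (by omega))
  have hlim : Tendsto (fun n => |Pm (k + 2) (v n)|) atTop (𝓝 (envelope k c)) :=
    abs_of_pos hM ▸ (tendsto_Pm_testVector k hc).abs
  set S := {a : ℝ | ∃ x, ‖x‖ = 1 ∧ a = |Pm (k + 2) x|}
  have hmem : ∀ n, |Pm (k + 2) (v n)| ∈ S := fun n => ⟨v n, hv n, rfl⟩
  have hsup : sSup S = envelope k c :=
    (isLUB_of_mem_closure (by rintro _ ⟨x, hx, rfl⟩; exact (hlt x hx).le)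
      (mem_closure_of_tendsto hlim (.of_forall hmem))).csSup_eq ⟨_, hmem 0⟩
  refine ⟨?_, fun ⟨x, hx, hPx⟩ => (hlt x hx).ne (hPx.trans hsup)⟩
  rw [hsup, envelope_sqrt_eq_rpow]
  push_cast
  ring_nf
end

section
/- The continuous 2-homogeneous polynomial P : ℓ₂ → ℓ₂ defined by P(x) = x₁ · (x₂/2, 2x₃/3, 3x₄/4, ...) satisfies ‖P‖ = 1/2 and does not attain its norm, while the unit-vector sequence ((1/√2)e₁ + (1/√2)eₙ)_{n≥2} is a non-weakly null maximizing sequence for P. Hence the pair (ℓ₂, ℓ₂) fails the 2-homogeneous polynomial weak maximizing property. -/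
/-!
On a unit vector `x`, the `k`-th coordinate of `P x` is at most `|x₀ x_{k+1}|` in absolute value,
strictly so unless `x₀ x_{k+1} = 0`, because the weights `(k+1)/(k+2)` stay below `1`. Summing,
`‖P x‖² ≤ x₀² (1 - x₀²) ≤ 1/4`, and equality in the second step forces `x₀² = 1/2`, hence a nonzero
tail coordinate and strict inequality in the first. The unit vectors `(e₀ + e_{n+1})/√2` are sent
to `((n+1)/(2(n+2))) eₙ`, whose norms tend to `1/2`, while their inner product with `e₀` stays `1/√2`.
-/

open Filter Topology
open scoped lp

namespace lp

theorem hasSum_sq_s16 {ι : Type*} (x : ℓ^2(ι, ℝ)) : HasSum (fun i => x i ^ 2) (‖x‖ ^ 2) := by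
  simpa [Real.norm_eq_abs, sq_abs] using lp.hasSum_norm (p := 2) (by norm_num) x

theorem hasSum_sq_succ_s16 (x : ℓ^2(ℕ, ℝ)) :
    HasSum (fun k => x (k + 1) ^ 2) (‖x‖ ^ 2 - x 0 ^ 2) := by
  simpa using (hasSum_nat_add_iff' 1).2 (hasSum_sq_s16 x)

end lp

noncomputable def diagonalUnit (n : ℕ) : ℓ^2(ℕ, ℝ) :=
  (1 / √2) • lp.single 2 0 1 + (1 / √2) • lp.single 2 (n + 1) 1

theorem diagonalUnit_apply_zero (n : ℕ) : diagonalUnit n 0 = 1 / √2 := by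
  rw [diagonalUnit, lp.coeFn_add, Pi.add_apply, lp.coeFn_smul, lp.coeFn_smul]
  simp

theorem diagonalUnit_apply_succ (n k : ℕ) :
    diagonalUnit n (k + 1) = if k = n then 1 / √2 else 0 := by
  rw [diagonalUnit, lp.coeFn_add, Pi.add_apply, lp.coeFn_smul, lp.coeFn_smul]
  by_cases h : k = n <;> simp [h]

theorem norm_diagonalUnit (n : ℕ) : ‖diagonalUnit n‖ = 1 := by
  have hsingle (i : ℕ) : ‖(1 / √2 : ℝ) • (lp.single 2 i 1 : ℓ^2(ℕ, ℝ))‖ ^ 2 = 1 / 2 := by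
    rw [norm_smul, lp.norm_single (by norm_num)]
    simp
  have horth : inner ℝ ((1 / √2 : ℝ) • (lp.single 2 0 1 : ℓ^2(ℕ, ℝ)))
      ((1 / √2 : ℝ) • lp.single 2 (n + 1) 1) = 0 := by
    simp [real_inner_smul_left, real_inner_smul_right, lp.inner_single_left]
  have hsq : ‖diagonalUnit n‖ ^ 2 = 1 := by
    rw [diagonalUnit, norm_add_sq_real, horth, hsingle, hsingle]
    norm_num
  exact (pow_eq_one_iff_of_nonneg (norm_nonneg _) two_ne_zero).1 hsq

theorem inner_single_zero_diagonalUnit (n : ℕ) :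
    inner ℝ (lp.single 2 0 1 : ℓ^2(ℕ, ℝ)) (diagonalUnit n) = 1 / √2 := by
  simp [lp.inner_single_left, diagonalUnit_apply_zero]

theorem not_weaklyNull_diagonalUnit :
    ¬ ∀ f : ℓ^2(ℕ, ℝ) →L[ℝ] ℝ, Tendsto (fun n => f (diagonalUnit n)) atTop (𝓝 0) := by
  intro h
  simpa [inner_single_zero_diagonalUnit] using h (innerSL ℝ (lp.single 2 0 1))

section WeightedProduct

variable {P : ℓ^2(ℕ, ℝ) → ℓ^2(ℕ, ℝ)} {c : ℕ → ℝ}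

theorem sq_apply_le_of_abs_le_one (hP : ∀ x k, P x k = x 0 * c k * x (k + 1)) {k : ℕ}
    (hc : |c k| ≤ 1) (x : ℓ^2(ℕ, ℝ)) : P x k ^ 2 ≤ x 0 ^ 2 * x (k + 1) ^ 2 := by
  have hc2 : c k ^ 2 ≤ 1 := (sq_le_one_iff_abs_le_one _).2 hc
  calc P x k ^ 2 = c k ^ 2 * (x 0 * x (k + 1)) ^ 2 := by rw [hP]; ring
    _ ≤ 1 * (x 0 * x (k + 1)) ^ 2 := by gcongr
    _ = x 0 ^ 2 * x (k + 1) ^ 2 := by ring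

theorem sq_apply_lt_of_abs_lt_one (hP : ∀ x k, P x k = x 0 * c k * x (k + 1)) {k : ℕ}
    (hc : |c k| < 1) {x : ℓ^2(ℕ, ℝ)} (h0 : x 0 ≠ 0) (hk : x (k + 1) ≠ 0) :
    P x k ^ 2 < x 0 ^ 2 * x (k + 1) ^ 2 := by
  have hc2 : c k ^ 2 < 1 := (sq_lt_one_iff_abs_lt_one _).2 hc
  have hpos : 0 < (x 0 * x (k + 1)) ^ 2 := by positivity
  calc P x k ^ 2 = c k ^ 2 * (x 0 * x (k + 1)) ^ 2 := by rw [hP]; ring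
    _ < 1 * (x 0 * x (k + 1)) ^ 2 := by gcongr
    _ = x 0 ^ 2 * x (k + 1) ^ 2 := by ring

theorem norm_sq_le_of_abs_le_one (hP : ∀ x k, P x k = x 0 * c k * x (k + 1))
    (hc : ∀ k, |c k| ≤ 1) (x : ℓ^2(ℕ, ℝ)) : ‖P x‖ ^ 2 ≤ x 0 ^ 2 * (‖x‖ ^ 2 - x 0 ^ 2) :=
  hasSum_le (fun k => sq_apply_le_of_abs_le_one hP (hc k) x) (lp.hasSum_sq_s16 (P x))
    ((lp.hasSum_sq_succ_s16 x).mul_left _)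

theorem norm_sq_lt_of_abs_lt_one (hP : ∀ x k, P x k = x 0 * c k * x (k + 1))
    (hc : ∀ k, |c k| < 1) {x : ℓ^2(ℕ, ℝ)} (h0 : x 0 ≠ 0) {k : ℕ} (hk : x (k + 1) ≠ 0) :
    ‖P x‖ ^ 2 < x 0 ^ 2 * (‖x‖ ^ 2 - x 0 ^ 2) :=
  hasSum_lt (fun j => sq_apply_le_of_abs_le_one hP (hc j).le x)
    (sq_apply_lt_of_abs_lt_one hP (hc k) h0 hk) (lp.hasSum_sq_s16 (P x))
    ((lp.hasSum_sq_succ_s16 x).mul_left _)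

theorem norm_apply_lt_half (hP : ∀ x k, P x k = x 0 * c k * x (k + 1))
    (hc : ∀ k, |c k| < 1) {x : ℓ^2(ℕ, ℝ)} (hx : ‖x‖ = 1) : ‖P x‖ < 1 / 2 := by
  by_contra! hge
  have hquarter : 1 / 4 ≤ ‖P x‖ ^ 2 := by nlinarith
  have hle := norm_sq_le_of_abs_le_one hP (fun k => (hc k).le) x
  rw [hx] at hle
  have hx0 : x 0 ^ 2 = 1 / 2 := by nlinarith [sq_nonneg (x 0 ^ 2 - 1 / 2)]
  obtain ⟨k, hk⟩ : ∃ k, x (k + 1) ≠ 0 := by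
    by_contra! htail
    have hsum := lp.hasSum_sq_succ_s16 x
    simp only [htail, hx, hx0] at hsum
    have : (1 : ℝ) ^ 2 - 1 / 2 = 0 := hsum.unique (by simp)
    norm_num at this
  have hlt := norm_sq_lt_of_abs_lt_one hP hc (x := x) (fun h => by simp [h] at hx0) hk
  rw [hx, hx0] at hlt
  linarith

theorem apply_diagonalUnit (hP : ∀ x k, P x k = x 0 * c k * x (k + 1)) (n : ℕ) :
    P (diagonalUnit n) = (c n / 2) • lp.single 2 n 1 := by
  ext k
  rw [hP, diagonalUnit_apply_zero, diagonalUnit_apply_succ, lp.coeFn_smul, Pi.smul_apply]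
  by_cases h : k = n
  · subst h
    simp only [one_div, ↓reduceIte, lp.single_apply, Pi.single_eq_same, smul_eq_mul, mul_one]
    field_simp
    rw [Real.sq_sqrt zero_le_two, mul_comm]
  · simp [h]

theorem norm_apply_diagonalUnit (hP : ∀ x k, P x k = x 0 * c k * x (k + 1)) (n : ℕ) :
    ‖P (diagonalUnit n)‖ = |c n| / 2 := by
  rw [apply_diagonalUnit hP, norm_smul, lp.norm_single (by norm_num)]
  simp

theorem tendsto_norm_apply_diagonalUnit (hP : ∀ x k, P x k = x 0 * c k * x (k + 1))
    (hc : Tendsto c atTop (𝓝 1)) :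
    Tendsto (fun n => ‖P (diagonalUnit n)‖) atTop (𝓝 (1 / 2)) := by
  simp_rw [norm_apply_diagonalUnit hP]
  simpa using (hc.abs.div_const 2)

end WeightedProduct

/-- the 2-homogeneous polynomial `P : ℓ₂ → ℓ₂`,
`P(x) = x₁ (x₂/2, 2x₃/3, 3x₄/4, …)` (0-indexed: `(P x)ₖ = x₀ ((k+1)/(k+2)) x_{k+1}`),
has norm `1/2`, does not attain its norm, and the unit vectors
`(1/√2)e₁ + (1/√2)eₙ`, `n ≥ 2`, form a non-weakly null maximizing sequence for `P`. -/
theorem vector_valued_2hom_counterexample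
    (P : lp (fun _ : ℕ => ℝ) 2 → lp (fun _ : ℕ => ℝ) 2)
    (hP : ∀ x, ∀ k : ℕ, (P x : ∀ _ : ℕ, ℝ) k =
      (x : ∀ _ : ℕ, ℝ) 0 * (((k : ℝ) + 1) / ((k : ℝ) + 2)) * (x : ∀ _ : ℕ, ℝ) (k + 1))
    (u : ℕ → lp (fun _ : ℕ => ℝ) 2)
    (hu : ∀ n, u n = (1 / Real.sqrt 2) • lp.single 2 0 (1 : ℝ) +
      (1 / Real.sqrt 2) • lp.single 2 (n + 1) (1 : ℝ)) :
    sSup {c : ℝ | ∃ x, ‖x‖ = 1 ∧ c = ‖P x‖} = 1 / 2 ∧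
    (¬ ∃ x, ‖x‖ = 1 ∧ ‖P x‖ = 1 / 2) ∧
    (∀ n, ‖u n‖ = 1) ∧
    (¬ ∀ f : lp (fun _ : ℕ => ℝ) 2 →L[ℝ] ℝ, Tendsto (fun n => f (u n)) atTop (𝓝 0)) ∧
    Tendsto (fun n => ‖P (u n)‖) atTop (𝓝 (1 / 2)) := by
  obtain rfl : u = diagonalUnit := funext hu
  have hweight (k : ℕ) : |((k : ℝ) + 1) / ((k : ℝ) + 2)| < 1 := by
    rw [abs_of_nonneg (by positivity), div_lt_one (by positivity)]
    linarith
  have hweight_lim : Tendsto (fun k : ℕ => ((k : ℝ) + 1) / ((k : ℝ) + 2)) atTop (𝓝 1) := by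
    refine ((tendsto_natCast_div_add_atTop (1 : ℝ)).comp (tendsto_add_atTop_nat 1)).congr
      fun k => ?_
    simp only [Function.comp_apply, Nat.cast_add, Nat.cast_one]
    ring
  have hlim := tendsto_norm_apply_diagonalUnit hP hweight_lim
  have hlt {x : ℓ^2(ℕ, ℝ)} (hx : ‖x‖ = 1) : ‖P x‖ < 1 / 2 := norm_apply_lt_half hP hweight hx
  refine ⟨?_, fun ⟨x, hx, hPx⟩ => (hlt hx).ne hPx, norm_diagonalUnit,
    not_weaklyNull_diagonalUnit, hlim⟩
  have hbound : 1 / 2 ∈ upperBounds {c : ℝ | ∃ x, ‖x‖ = 1 ∧ c = ‖P x‖} := by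
    rintro _ ⟨x, hx, rfl⟩
    exact (hlt hx).le
  have hclosure : 1 / 2 ∈ closure {c : ℝ | ∃ x, ‖x‖ = 1 ∧ c = ‖P x‖} :=
    mem_closure_of_tendsto hlim (.of_forall fun n => ⟨_, norm_diagonalUnit n, rfl⟩)
  exact (isLUB_of_mem_closure hbound hclosure).csSup_eq ⟨_, _, norm_diagonalUnit 0, rfl⟩
end

section
/- Let P : ℓ₂ → 𝕂 be a continuous 2-homogeneous polynomial. If there exists a non-weakly null maximizing sequence for P (unit vectors xₙ with |P(xₙ)| → ‖P‖ not converging weakly to 0), then P attains its norm. In particular, the pair (ℓ₂, 𝕂) has the 2-homogeneous polynomial weak maximizing property. -/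
/-!
A non-weakly null maximizing sequence `x n` has a subsequence on which some functional `f` stays
outside a neighbourhood of `0`; by sequential Banach–Alaoglu in the separable Hilbert space `ℓ²`,
a further subsequence converges weakly to some `x₀`, and `x₀ ≠ 0` because `f x₀ ≠ 0`.
Write `x n = x₀ + z n` with `z n` weakly null. Then `‖z n‖² → 1 - ‖x₀‖²`, the cross terms
`B x₀ (z n)` and `B (z n) x₀` tend to `0`, and `‖B (z n) (z n)‖ ≤ ‖P‖ ‖z n‖²`, so in the limit
`‖P‖ ≤ ‖P x₀‖ + ‖P‖ (1 - ‖x₀‖²)`. Hence `‖P‖ ‖x₀‖² ≤ ‖P x₀‖`, and `x₀ / ‖x₀‖` attains the norm.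
-/

open Filter Topology

open TopologicalSpace in
theorem lp.separableSpace {α : Type*} [Countable α] {E : α → Type*}
    [∀ i, NormedAddCommGroup (E i)] [∀ i, SeparableSpace (E i)] {p : ENNReal} [Fact (1 ≤ p)]
    (hp : p ≠ ⊤) : SeparableSpace (lp E p) := by
  classical
  set s : Set (lp E p) := ⋃ i, Set.range (lp.single p i)
  have hs : IsSeparable (Submodule.span ℕ s : Set (lp E p)) :=
    (IsSeparable.iUnion fun i =>
      isSeparable_range (lp.singleContinuousAddMonoidHom E p i).continuous).span
  refine isSeparable_univ_iff.1 (hs.closure.mono fun f _ => ?_)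
  refine mem_closure_of_tendsto (lp.hasSum_single hp f) (Eventually.of_forall fun t => ?_)
  exact Submodule.sum_mem _ fun i _ =>
    Submodule.subset_span (Set.mem_iUnion.2 ⟨i, Set.mem_range_self _⟩)

section NormedSpace
variable {𝕜 E : Type*} [RCLike 𝕜] [NormedAddCommGroup E] [NormedSpace 𝕜 E]

theorem norm_apply_smul_self (B : E →L[𝕜] E →L[𝕜] 𝕜) (a : 𝕜) (y : E) :
    ‖B (a • y) (a • y)‖ = ‖a‖ ^ 2 * ‖B y y‖ := by
  simp only [map_smul, smul_apply, smul_eq_mul, norm_mul]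
  ring

theorem norm_apply_inv_norm_smul_self (B : E →L[𝕜] E →L[𝕜] 𝕜) (y : E) :
    ‖B ((‖y‖⁻¹ : 𝕜) • y) ((‖y‖⁻¹ : 𝕜) • y)‖ = ‖B y y‖ / ‖y‖ ^ 2 := by
  rw [norm_apply_smul_self, norm_inv, RCLike.norm_ofReal, abs_norm, inv_pow, inv_mul_eq_div]

theorem norm_apply_self_le_mul_sq (B : E →L[𝕜] E →L[𝕜] 𝕜) {M : ℝ}
    (hM : ∀ y, ‖y‖ = 1 → ‖B y y‖ ≤ M) (y : E) : ‖B y y‖ ≤ M * ‖y‖ ^ 2 := by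
  rcases eq_or_ne y 0 with rfl | hy
  · simp
  · have h := hM _ (norm_smul_inv_norm (𝕜 := 𝕜) hy)
    rw [norm_apply_inv_norm_smul_self, div_le_iff₀ (by positivity)] at h
    exact h

end NormedSpace

section InnerProductSpace
variable {𝕜 E : Type*} [RCLike 𝕜] [NormedAddCommGroup E] [InnerProductSpace 𝕜 E]

theorem exists_subseq_weak_tendsto_of_bounded [CompleteSpace E] [TopologicalSpace.SeparableSpace E]
    {x : ℕ → E} {C : ℝ} (hx : ∀ n, ‖x n‖ ≤ C) :
    ∃ x₀ : E, ∃ φ : ℕ → ℕ, StrictMono φ ∧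
      ∀ f : StrongDual 𝕜 E, Tendsto (fun n => f (x (φ n))) atTop (𝓝 (f x₀)) := by
  let T := InnerProductSpace.toDual 𝕜 E
  let y : ℕ → WeakDual 𝕜 E := fun n => WeakDual.toStrongDual.symm (T (x n))
  have hy : ∀ n, y n ∈ WeakDual.toStrongDual ⁻¹' Metric.closedBall 0 C := fun n => by
    simpa [y, T] using hx n
  obtain ⟨x', -, φ, hφ, hlim⟩ := WeakDual.isSeqCompact_closedBall 𝕜 E 0 C hy
  refine ⟨T.symm (WeakDual.toStrongDual x'), φ, hφ, fun f => ?_⟩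
  have hv : ∀ w, f w = starRingEnd 𝕜 (T w (T.symm f)) := fun w => by
    simp [T, InnerProductSpace.toDual_symm_apply]
  simp only [hv]
  refine (RCLike.continuous_conj.tendsto _).comp ?_
  simpa [y, T, Function.comp_def] using
    ((WeakDual.eval_continuous (T.symm f)).tendsto x').comp hlim

theorem tendsto_norm_sub_sq_of_weak_tendsto {x : ℕ → E} {x₀ : E} (hx : ∀ n, ‖x n‖ = 1)
    (hweak : ∀ f : StrongDual 𝕜 E, Tendsto (fun n => f (x n)) atTop (𝓝 (f x₀))) :
    Tendsto (fun n => ‖x n - x₀‖ ^ 2) atTop (𝓝 (1 - ‖x₀‖ ^ 2)) := by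
  have hinner : Tendsto (fun n => RCLike.re (inner 𝕜 (x n) x₀)) atTop (𝓝 (‖x₀‖ ^ 2)) := by
    have := (RCLike.continuous_re.tendsto _).comp (hweak (innerSL 𝕜 x₀))
    simp only [Function.comp_def, innerSL_apply_apply, inner_self_eq_norm_sq] at this
    simpa only [inner_re_symm (𝕜 := 𝕜) x₀] using this
  have heq : ∀ n, ‖x n - x₀‖ ^ 2 = 1 - 2 * RCLike.re (inner 𝕜 (x n) x₀) + ‖x₀‖ ^ 2 := fun n => by
    rw [@norm_sub_sq 𝕜, hx, one_pow]
  simp only [heq]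
  convert (tendsto_const_nhds.sub (hinner.const_mul 2)).add_const (‖x₀‖ ^ 2) using 2
  ring

theorem mul_sq_le_norm_apply_self_of_weak_tendsto (B : E →L[𝕜] E →L[𝕜] 𝕜) {M : ℝ}
    (hM : ∀ y, ‖B y y‖ ≤ M * ‖y‖ ^ 2) {x : ℕ → E} {x₀ : E} (hx : ∀ n, ‖x n‖ = 1)
    (hmax : Tendsto (fun n => ‖B (x n) (x n)‖) atTop (𝓝 M))
    (hweak : ∀ f : StrongDual 𝕜 E, Tendsto (fun n => f (x n)) atTop (𝓝 (f x₀))) :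
    M * ‖x₀‖ ^ 2 ≤ ‖B x₀ x₀‖ := by
  set z := fun n => x n - x₀
  have hz : ∀ f : StrongDual 𝕜 E, Tendsto (fun n => ‖f (z n)‖) atTop (𝓝 0) := fun f => by
    simpa [z] using ((hweak f).sub_const (f x₀)).norm
  have hsplit : ∀ n, ‖B (x n) (x n)‖
      ≤ ‖B x₀ x₀‖ + ‖B x₀ (z n)‖ + ‖B.flip x₀ (z n)‖ + M * ‖z n‖ ^ 2 := fun n => by
    have hexp : B (x n) (x n) = B x₀ x₀ + B x₀ (z n) + B.flip x₀ (z n) + B (z n) (z n) := by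
      simp only [z, map_sub, sub_apply, ContinuousLinearMap.flip_apply]
      ring
    rw [hexp]
    refine norm_add₄_le.trans ?_
    gcongr
    exact hM (z n)
  have hbound : Tendsto (fun n => ‖B x₀ x₀‖ + ‖B x₀ (z n)‖ + ‖B.flip x₀ (z n)‖ + M * ‖z n‖ ^ 2)
      atTop (𝓝 (‖B x₀ x₀‖ + 0 + 0 + M * (1 - ‖x₀‖ ^ 2))) :=
    (((hz (B x₀)).const_add _).add (hz (B.flip x₀))).add
      ((tendsto_norm_sub_sq_of_weak_tendsto hx hweak).const_mul M)
  have := le_of_tendsto_of_tendsto' hmax hbound hsplit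
  linarith

end InnerProductSpace

theorem scalar_2hom_weak_maximizing_general {𝕜 : Type*} [RCLike 𝕜]
    (B : lp (fun _ : ℕ => 𝕜) 2 →L[𝕜] lp (fun _ : ℕ => 𝕜) 2 →L[𝕜] 𝕜)
    (x : ℕ → lp (fun _ : ℕ => 𝕜) 2)
    (hx1 : ∀ n, ‖x n‖ = 1)
    (hmax : Tendsto (fun n => ‖B (x n) (x n)‖) atTop
      (𝓝 (sSup {c : ℝ | ∃ y, ‖y‖ = 1 ∧ c = ‖B y y‖})))
    (hnw : ¬ ∀ f : lp (fun _ : ℕ => 𝕜) 2 →L[𝕜] 𝕜,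
      Tendsto (fun n => f (x n)) atTop (𝓝 0)) :
    ∃ x₀, ‖x₀‖ = 1 ∧ ‖B x₀ x₀‖ = sSup {c : ℝ | ∃ y, ‖y‖ = 1 ∧ c = ‖B y y‖} := by
  have hbdd : BddAbove {c : ℝ | ∃ y, ‖y‖ = 1 ∧ c = ‖B y y‖} :=
    ⟨‖B‖, by rintro _ ⟨y, hy, rfl⟩; simpa [hy] using B.le_opNorm₂ y y⟩
  have hM := norm_apply_self_le_mul_sq B fun y hy => le_csSup hbdd ⟨y, hy, rfl⟩
  obtain ⟨f, hf⟩ := not_forall.1 hnw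
  obtain ⟨s, hs, hfreq⟩ := not_tendsto_iff_exists_frequently_notMem.1 hf
  obtain ⟨φ₀, hφ₀, hout⟩ := extraction_of_frequently_atTop hfreq
  have := lp.separableSpace (E := fun _ : ℕ => 𝕜) (p := 2) ENNReal.ofNat_ne_top
  obtain ⟨x₀, φ₁, hφ₁, hweak⟩ :=
    exists_subseq_weak_tendsto_of_bounded (𝕜 := 𝕜) (x := x ∘ φ₀) fun n => (hx1 _).le
  have hx₀ : x₀ ≠ 0 := by
    rintro rfl
    obtain ⟨n, hn⟩ := ((hweak f).eventually_mem (by simpa using hs)).exists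
    exact hout (φ₁ n) hn
  have hlow := mul_sq_le_norm_apply_self_of_weak_tendsto B hM (fun n => hx1 _)
    (hmax.comp (hφ₀.comp hφ₁).tendsto_atTop) hweak
  refine ⟨(‖x₀‖⁻¹ : 𝕜) • x₀, norm_smul_inv_norm hx₀, ?_⟩
  rw [norm_apply_inv_norm_smul_self, div_eq_iff (by positivity)]
  exact le_antisymm (hM x₀) hlow

/-- a continuous scalar-valued 2-homogeneous polynomial on `ℓ₂`
(represented by a continuous symmetric bilinear form `B`, `P x = B x x`) admitting a
non-weakly null maximizing sequence attains its norm; here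
`‖P‖ = sSup {‖B y y‖ : ‖y‖ = 1}`. -/
theorem scalar_2hom_weak_maximizing {𝕜 : Type*} [RCLike 𝕜]
    (B : lp (fun _ : ℕ => 𝕜) 2 →L[𝕜] lp (fun _ : ℕ => 𝕜) 2 →L[𝕜] 𝕜)
    (hsymm : ∀ x y, B x y = B y x)
    (x : ℕ → lp (fun _ : ℕ => 𝕜) 2)
    (hx1 : ∀ n, ‖x n‖ = 1)
    (hmax : Tendsto (fun n => ‖B (x n) (x n)‖) atTop
      (𝓝 (sSup {c : ℝ | ∃ y, ‖y‖ = 1 ∧ c = ‖B y y‖})))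
    (hnw : ¬ ∀ f : lp (fun _ : ℕ => 𝕜) 2 →L[𝕜] 𝕜,
      Tendsto (fun n => f (x n)) atTop (𝓝 0)) :
    ∃ x₀, ‖x₀‖ = 1 ∧ ‖B x₀ x₀‖ = sSup {c : ℝ | ∃ y, ‖y‖ = 1 ∧ c = ‖B y y‖} :=
  scalar_2hom_weak_maximizing_general B x hx1 hmax hnw
end

section
/- Let H be a Hilbert space and P : H → 𝕂 a continuous 2-homogeneous polynomial with associated symmetric bilinear form T_P. Then ‖P‖ = ‖T_P‖, where ‖T_P‖ = sup{|T_P(x,y)| : ‖x‖ = ‖y‖ = 1}. -/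
/-!
The diagonal `P x = B x x` is 2-homogeneous, so a bound `‖P u‖ ≤ M` on the unit sphere gives
`‖P z‖ ≤ M ‖z‖²` everywhere. By symmetry `4 B x y = P (x + y) - P (x - y)`, and the parallelogram
law turns `M (‖x + y‖² + ‖x - y‖²) / 4` into `M (‖x‖² + ‖y‖²) / 2`, which is `M` on unit vectors.
-/

namespace ContinuousLinearMap

variable {𝕜 E : Type*} [RCLike 𝕜] [NormedAddCommGroup E]

section NormedSpace

variable [NormedSpace 𝕜 E]

theorem norm_apply_smul_self (B : E →L[𝕜] E →L[𝕜] 𝕜) (c : 𝕜) (z : E) :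
    ‖B (c • z) (c • z)‖ = ‖c‖ ^ 2 * ‖B z z‖ := by
  simp only [map_smul, smul_apply, smul_eq_mul, norm_mul]
  ring

theorem norm_apply_self_le_of_norm_eq_one {B : E →L[𝕜] E →L[𝕜] 𝕜} {M : ℝ}
    (hM : ∀ u, ‖u‖ = 1 → ‖B u u‖ ≤ M) (z : E) : ‖B z z‖ ≤ M * ‖z‖ ^ 2 := by
  rcases eq_or_ne z 0 with rfl | hz
  · simp
  have hz' : 0 < ‖z‖ := norm_pos_iff.mpr hz
  have hunit := hM _ (norm_smul_inv_norm (𝕜 := 𝕜) hz)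
  rw [norm_apply_smul_self, norm_inv, RCLike.norm_ofReal, abs_of_pos hz', inv_pow,
    inv_mul_le_iff₀ (by positivity)] at hunit
  linarith

theorem apply_add_self_sub_apply_sub_self {B : E →L[𝕜] E →L[𝕜] 𝕜}
    (hsymm : ∀ x y, B x y = B y x) (x y : E) :
    B (x + y) (x + y) - B (x - y) (x - y) = 4 * B x y := by
  simp only [map_add, map_sub, add_apply, sub_apply, hsymm y x]
  ring

end NormedSpace

theorem norm_apply_le_of_symm [InnerProductSpace 𝕜 E] {B : E →L[𝕜] E →L[𝕜] 𝕜} {M : ℝ}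
    (hsymm : ∀ x y, B x y = B y x) (hM : ∀ z, ‖B z z‖ ≤ M * ‖z‖ ^ 2) (x y : E) :
    ‖B x y‖ ≤ M * (‖x‖ ^ 2 + ‖y‖ ^ 2) / 2 := by
  have hpolar : 4 * ‖B x y‖ = ‖B (x + y) (x + y) - B (x - y) (x - y)‖ := by
    rw [apply_add_self_sub_apply_sub_self hsymm, norm_mul]
    norm_num
  calc ‖B x y‖ = ‖B (x + y) (x + y) - B (x - y) (x - y)‖ / 4 := by linarith
    _ ≤ (M * ‖x + y‖ ^ 2 + M * ‖x - y‖ ^ 2) / 4 := by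
      gcongr
      exact (norm_sub_le _ _).trans (add_le_add (hM _) (hM _))
    _ = M * (‖x‖ ^ 2 + ‖y‖ ^ 2) / 2 := by
      rw [← mul_add, parallelogram_law_with_norm 𝕜 x y]
      ring

end ContinuousLinearMap

open ContinuousLinearMap in
theorem banach_polynomial_norm_general {𝕜 H : Type*} [RCLike 𝕜]
    [NormedAddCommGroup H] [InnerProductSpace 𝕜 H]
    (B : H →L[𝕜] H →L[𝕜] 𝕜) (hsymm : ∀ x y, B x y = B y x) :
    sSup {c : ℝ | ∃ x, ‖x‖ = 1 ∧ c = ‖B x x‖} = ‖B‖ := by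
  set S := {c : ℝ | ∃ x : H, ‖x‖ = 1 ∧ c = ‖B x x‖}
  have hS : ∀ c ∈ S, 0 ≤ c ∧ c ≤ ‖B‖ := by
    rintro _ ⟨x, hx, rfl⟩
    refine ⟨norm_nonneg _, ?_⟩
    simpa [hx] using B.le_opNorm₂ x x
  have hM0 : 0 ≤ sSup S := Real.sSup_nonneg fun c hc => (hS c hc).1
  have hunit : ∀ u : H, ‖u‖ = 1 → ‖B u u‖ ≤ sSup S :=
    fun u hu => le_csSup ⟨‖B‖, fun c hc => (hS c hc).2⟩ ⟨u, hu, rfl⟩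
  refine le_antisymm (Real.sSup_le (fun c hc => (hS c hc).2) B.opNorm_nonneg) ?_
  refine opNorm_le_of_unit_norm hM0 fun x hx => opNorm_le_of_unit_norm hM0 fun y hy => ?_
  have := norm_apply_le_of_symm hsymm (norm_apply_self_le_of_norm_eq_one hunit) x y
  rw [hx, hy] at this
  linarith

/-- Banach: on a Hilbert space, the norm of a continuous 2-homogeneous
polynomial `P x = B x x` associated with a continuous symmetric bilinear form `B`
coincides with the norm of `B` (the operator norm of `B : H →L H →L 𝕜`, which equals
`sup {‖B x y‖ : ‖x‖ = ‖y‖ = 1}`). -/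
theorem banach_polynomial_norm {𝕜 H : Type*} [RCLike 𝕜]
    [NormedAddCommGroup H] [InnerProductSpace 𝕜 H] [CompleteSpace H]
    (B : H →L[𝕜] H →L[𝕜] 𝕜) (hsymm : ∀ x y, B x y = B y x) :
    sSup {c : ℝ | ∃ x, ‖x‖ = 1 ∧ c = ‖B x x‖} = ‖B‖ :=
  banach_polynomial_norm_general B hsymm
end

section
/- Suppose the pair (E, F) has the m-homogeneous polynomial weak maximizing property. Let P : E → F be a continuous m-homogeneous polynomial and K : E → F a completely continuous (weak-to-norm sequentially continuous) m-homogeneous polynomial with ‖P‖ < ‖P + K‖. Then P + K attains its norm. -/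
/-!
Along a weakly null maximizing sequence for `P + K`, complete continuity forces `K → 0` in
norm, so `‖P + K‖` would be at most `‖P‖`. Hence, when `‖P‖ < ‖P + K‖`, a maximizing
sequence for `P + K` is never weakly null, and the weak maximizing property applies.
-/

open Filter Topology

section SphereNorms

variable {E F : Type*} [Norm E] [Norm F]

/-- `sSup (sphereNorms Q)` is the norm of `Q`. -/
def sphereNorms (Q : E → F) : Set ℝ := {c : ℝ | ∃ y, ‖y‖ = 1 ∧ c = ‖Q y‖}

theorem sphereNorms_nonempty_iff {Q : E → F} :
    (sphereNorms Q).Nonempty ↔ ∃ y : E, ‖y‖ = 1 :=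
  ⟨fun ⟨_, y, hy, _⟩ => ⟨y, hy⟩, fun ⟨y, hy⟩ => ⟨_, y, hy, rfl⟩⟩

theorem sphereNorms_nonempty_of_sSup_lt {P Q : E → F}
    (h : sSup (sphereNorms P) < sSup (sphereNorms Q)) : (sphereNorms Q).Nonempty := by
  by_contra hQ
  have hP : sphereNorms P = ∅ := Set.not_nonempty_iff_eq_empty.1 fun hP =>
    hQ (sphereNorms_nonempty_iff.2 (sphereNorms_nonempty_iff.1 hP))
  rw [Set.not_nonempty_iff_eq_empty.1 hQ, hP] at h
  exact lt_irrefl _ h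

theorem exists_tendsto_sSup_sphereNorms {Q : E → F} (hne : (sphereNorms Q).Nonempty)
    (hbdd : BddAbove (sphereNorms Q)) :
    ∃ x : ℕ → E, (∀ n, ‖x n‖ = 1) ∧
      Tendsto (fun n => ‖Q (x n)‖) atTop (𝓝 (sSup (sphereNorms Q))) := by
  obtain ⟨u, -, hu, hmem⟩ := exists_seq_tendsto_sSup hne hbdd
  choose x hx hux using hmem
  exact ⟨x, hx, funext hux ▸ hu⟩

end SphereNorms

theorem le_sSup_sphereNorms_of_tendsto {E F : Type*} [Norm E] [SeminormedAddCommGroup F]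
    {P K : E → F} (hP : BddAbove (sphereNorms P))
    {x : ℕ → E} (hx : ∀ n, ‖x n‖ = 1) {s : ℝ}
    (hs : Tendsto (fun n => ‖P (x n) + K (x n)‖) atTop (𝓝 s))
    (hK : Tendsto (fun n => K (x n)) atTop (𝓝 0)) :
    s ≤ sSup (sphereNorms P) := by
  have hlim : Tendsto (fun n => ‖P (x n) + K (x n)‖ - ‖K (x n)‖) atTop (𝓝 s) := by
    simpa using hs.sub hK.norm
  refine le_of_tendsto' hlim fun n => ?_
  calc ‖P (x n) + K (x n)‖ - ‖K (x n)‖ ≤ ‖P (x n)‖ := by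
        linarith [norm_add_le (P (x n)) (K (x n))]
    _ ≤ sSup (sphereNorms P) := le_csSup hP ⟨x n, hx n, rfl⟩

theorem bddAbove_sphereNorms {𝕜 ι E F : Type*} [RCLike 𝕜] [Fintype ι]
    [SeminormedAddCommGroup E] [NormedSpace 𝕜 E] [SeminormedAddCommGroup F] [NormedSpace 𝕜 F]
    (T : ContinuousMultilinearMap 𝕜 (fun _ : ι => E) F)
    {Q : E → F} (hQ : ∀ x, Q x = T fun _ => x) : BddAbove (sphereNorms Q) := by
  refine ⟨‖T‖, ?_⟩
  rintro c ⟨y, hy, rfl⟩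
  simpa [hQ, hy] using T.le_opNorm fun _ => y

theorem completely_continuous_perturbation_general {𝕜 E F : Type*} [RCLike 𝕜]
    [NormedAddCommGroup E] [NormedSpace 𝕜 E]
    [NormedAddCommGroup F] [NormedSpace 𝕜 F]
    (m : ℕ) (hm : 1 ≤ m)
    (hWMP : ∀ Q : E → F,
      (∃ TQ : ContinuousMultilinearMap 𝕜 (fun _ : Fin m => E) F,
        ∀ x, Q x = TQ (fun _ => x)) →
      (∃ x : ℕ → E, (∀ n, ‖x n‖ = 1) ∧
        Tendsto (fun n => ‖Q (x n)‖) atTop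
          (𝓝 (sSup {c : ℝ | ∃ y, ‖y‖ = 1 ∧ c = ‖Q y‖})) ∧
        ¬ ∀ f : E →L[𝕜] 𝕜, Tendsto (fun n => f (x n)) atTop (𝓝 0)) →
      ∃ x₀, ‖x₀‖ = 1 ∧ ‖Q x₀‖ = sSup {c : ℝ | ∃ y, ‖y‖ = 1 ∧ c = ‖Q y‖})
    (P K : E → F)
    (hP : ∃ TP : ContinuousMultilinearMap 𝕜 (fun _ : Fin m => E) F,
      ∀ x, P x = TP (fun _ => x))
    (hK : ∃ TK : ContinuousMultilinearMap 𝕜 (fun _ : Fin m => E) F,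
      ∀ x, K x = TK (fun _ => x))
    (hKcc : ∀ (x : ℕ → E) (x₀ : E),
      (∀ f : E →L[𝕜] 𝕜, Tendsto (fun n => f (x n)) atTop (𝓝 (f x₀))) →
      Tendsto (fun n => K (x n)) atTop (𝓝 (K x₀)))
    (hlt : sSup {c : ℝ | ∃ y, ‖y‖ = 1 ∧ c = ‖P y‖} <
      sSup {c : ℝ | ∃ y, ‖y‖ = 1 ∧ c = ‖P y + K y‖}) :
    ∃ x₀, ‖x₀‖ = 1 ∧ ‖P x₀ + K x₀‖ =
      sSup {c : ℝ | ∃ y, ‖y‖ = 1 ∧ c = ‖P y + K y‖} := by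
  obtain ⟨TP, hTP⟩ := hP
  obtain ⟨TK, hTK⟩ := hK
  have hPK : ∀ x, P x + K x = (TP + TK) fun _ => x := fun x => by
    rw [hTP, hTK, add_apply]
  obtain ⟨x, hx, hmax⟩ := exists_tendsto_sSup_sphereNorms
    (sphereNorms_nonempty_of_sSup_lt hlt) (bddAbove_sphereNorms _ hPK)
  refine hWMP (fun y => P y + K y) ⟨_, hPK⟩ ⟨x, hx, hmax, fun hnull => hlt.not_ge ?_⟩
  have : Nonempty (Fin m) := ⟨⟨0, hm⟩⟩
  have hK0 : K 0 = 0 := by rw [hTK]; exact TK.map_zero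
  have hKx : Tendsto (fun n => K (x n)) atTop (𝓝 0) :=
    hK0 ▸ hKcc x 0 fun f => by simpa using hnull f
  exact le_sSup_sphereNorms_of_tendsto (bddAbove_sphereNorms TP hTP) hx hmax hKx

/-- if `(E, F)` has the `m`-homogeneous polynomial weak maximizing
property, `P` is a continuous `m`-homogeneous polynomial, `K` is a completely continuous
`m`-homogeneous polynomial, and `‖P‖ < ‖P + K‖` (norms being sups over the unit sphere),
then `P + K` attains its norm. -/
theorem completely_continuous_perturbation {𝕜 E F : Type*} [RCLike 𝕜]
    [NormedAddCommGroup E] [NormedSpace 𝕜 E] [CompleteSpace E]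
    [NormedAddCommGroup F] [NormedSpace 𝕜 F] [CompleteSpace F]
    (m : ℕ) (hm : 1 ≤ m)
    (hWMP : ∀ Q : E → F,
      (∃ TQ : ContinuousMultilinearMap 𝕜 (fun _ : Fin m => E) F,
        ∀ x, Q x = TQ (fun _ => x)) →
      (∃ x : ℕ → E, (∀ n, ‖x n‖ = 1) ∧
        Tendsto (fun n => ‖Q (x n)‖) atTop
          (𝓝 (sSup {c : ℝ | ∃ y, ‖y‖ = 1 ∧ c = ‖Q y‖})) ∧
        ¬ ∀ f : E →L[𝕜] 𝕜, Tendsto (fun n => f (x n)) atTop (𝓝 0)) →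
      ∃ x₀, ‖x₀‖ = 1 ∧ ‖Q x₀‖ = sSup {c : ℝ | ∃ y, ‖y‖ = 1 ∧ c = ‖Q y‖})
    (P K : E → F)
    (hP : ∃ TP : ContinuousMultilinearMap 𝕜 (fun _ : Fin m => E) F,
      ∀ x, P x = TP (fun _ => x))
    (hK : ∃ TK : ContinuousMultilinearMap 𝕜 (fun _ : Fin m => E) F,
      ∀ x, K x = TK (fun _ => x))
    (hKcc : ∀ (x : ℕ → E) (x₀ : E),
      (∀ f : E →L[𝕜] 𝕜, Tendsto (fun n => f (x n)) atTop (𝓝 (f x₀))) →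
      Tendsto (fun n => K (x n)) atTop (𝓝 (K x₀)))
    (hlt : sSup {c : ℝ | ∃ y, ‖y‖ = 1 ∧ c = ‖P y‖} <
      sSup {c : ℝ | ∃ y, ‖y‖ = 1 ∧ c = ‖P y + K y‖}) :
    ∃ x₀, ‖x₀‖ = 1 ∧ ‖P x₀ + K x₀‖ =
      sSup {c : ℝ | ∃ y, ‖y‖ = 1 ∧ c = ‖P y + K y‖} :=
  completely_continuous_perturbation_general m hm hWMP P K hP hK hKcc hlt
end
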